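/- arXiv:0804.4038 — 6 statements merged into one kernel-verified Lean document; each statement's English description precedes it below -/
import Mathlib

section
/- det(tσ(X)) = (−1)^n Σ_{k=0}^{n} (u+γ_1)^{2n−2k} (s−(u+γ_1))^k γ_k. -/
open Matrix BigOperators

namespace AuxDet

open Finset

variable {R : Type*} [CommRing R]


/-- rows scaled picking: det of matrix equal to M on rows in s and identity elsewhere -/
lemma det_piecewise_one {m : ℕ} (s : Finset (Fin m)) (M : Matrix (Fin m) (Fin m) R) :
    (Matrix.of fun i j => if i ∈ s then M i j else (1 : Matrix (Fin m) (Fin m) R) i j).det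
      = ((M.submatrix (s.orderEmbOfFin rfl) (s.orderEmbOfFin rfl)).det) := by
  classical
  set P : Matrix (Fin m) (Fin m) R :=
    Matrix.of fun i j => if i ∈ s then M i j else (1 : Matrix (Fin m) (Fin m) R) i j with hP
  let e : {x // x ∈ s} ⊕ {x // ¬ x ∈ s} ≃ Fin m := Equiv.sumCompl _
  rw [← Matrix.det_submatrix_equiv_self e P]
  have hB : P.submatrix e e =
      Matrix.fromBlocks
        (Matrix.of fun (i : {x // x ∈ s}) (j : {x // x ∈ s}) => M i.1 j.1)
        (Matrix.of fun (i : {x // x ∈ s}) (j : {x // ¬ x ∈ s}) => M i.1 j.1)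
        0 1 := by
    ext i j
    cases i with
    | inl i =>
      cases j with
      | inl j => simp [P, e, Matrix.submatrix_apply, i.2]
      | inr j => simp [P, e, Matrix.submatrix_apply, i.2]
    | inr i =>
      cases j with
      | inl j =>
        have : (i.1 : Fin m) ≠ j.1 := by
          intro h; exact i.2 (h ▸ j.2)
        simp [P, e, Matrix.submatrix_apply, i.2, Matrix.one_apply, this]
      | inr j =>
        simp [P, e, Matrix.submatrix_apply, i.2, Matrix.one_apply, Subtype.ext_iff]
  rw [hB, Matrix.det_fromBlocks_zero₂₁, Matrix.det_one, mul_one]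
  let e2 : Fin s.card ≃ {x // x ∈ s} := (s.orderIsoOfFin rfl).toEquiv
  rw [← Matrix.det_submatrix_equiv_self e2]
  have he2 : (Matrix.of fun (i : {x // x ∈ s}) (j : {x // x ∈ s}) => M i.1 j.1).submatrix e2 e2
      = M.submatrix (s.orderEmbOfFin rfl) (s.orderEmbOfFin rfl) := by
    ext i j
    simp [e2, Matrix.submatrix_apply, Finset.coe_orderIsoOfFin_apply]
  rw [he2]

/-- expansion of det (a • 1 + M) in principal minors -/
lemma det_smul_one_add {m : ℕ} (a : R) (M : Matrix (Fin m) (Fin m) R) :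
    (a • (1 : Matrix (Fin m) (Fin m) R) + M).det
      = ∑ S : Finset (Fin m),
          a ^ (m - S.card) * (M.submatrix (S.orderEmbOfFin rfl) (S.orderEmbOfFin rfl)).det := by
  classical
  rw [add_comm (a • (1 : Matrix (Fin m) (Fin m) R)) M]
  rw [show (M + a • (1 : Matrix (Fin m) (Fin m) R)).det
      = (Matrix.detRowAlternating (R := R) (n := Fin m)).toMultilinearMap
          (M + a • (1 : Matrix (Fin m) (Fin m) R)) from rfl]
  erw [(Matrix.detRowAlternating (R := R) (n := Fin m)).toMultilinearMap.map_add_univ]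
  refine Finset.sum_congr rfl fun S _ => ?_
  have hpiece : (S.piecewise M (a • (1 : Matrix (Fin m) (Fin m) R)))
      = (Sᶜ).piecewise (fun i => a • (S.piecewise M (1 : Matrix (Fin m) (Fin m) R)) i)
          (S.piecewise M (1 : Matrix (Fin m) (Fin m) R)) := by
    funext i
    by_cases h : i ∈ S
    · simp [Finset.piecewise, h]
    · simp only [Finset.piecewise, h, if_neg, Finset.mem_compl, if_pos, not_false_iff]
      rfl
  rw [hpiece, (Matrix.detRowAlternating (R := R) (n := Fin m)).toMultilinearMap.map_piecewise_smul]
  rw [Finset.prod_const, Finset.card_compl, Fintype.card_fin, smul_eq_mul]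
  congr 1
  have hPP : (S.piecewise M (1 : Matrix (Fin m) (Fin m) R))
      = Matrix.of fun i j => if i ∈ S then M i j else (1 : Matrix (Fin m) (Fin m) R) i j := by
    funext i j
    by_cases h : i ∈ S <;> simp [Finset.piecewise, h]
  rw [hPP]
  exact det_piecewise_one S M

lemma det_mul_expand {k m : ℕ} (M : Matrix (Fin k) (Fin m) R) (N : Matrix (Fin m) (Fin k) R) :
    (M * N).det = ∑ r : Fin k → Fin m, (∏ i, M i (r i)) * (N.submatrix r id).det := by
  classical
  have hrow : (M * N) = fun i => ∑ x : Fin m, M i x • N x := by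
    funext i j
    simp [Matrix.mul_apply]
  rw [show (M * N).det
      = (Matrix.detRowAlternating (R := R) (n := Fin k)).toMultilinearMap (M * N) from rfl, hrow]
  rw [(Matrix.detRowAlternating (R := R) (n := Fin k)).toMultilinearMap.map_sum
    (g := fun i x => M i x • N x)]
  refine Finset.sum_congr rfl fun r _ => ?_
  rw [(Matrix.detRowAlternating (R := R) (n := Fin k)).toMultilinearMap.map_smul_univ
    (fun i => M i (r i)) (fun i => N (r i))]
  rw [smul_eq_mul]
  congr 1

lemma det_submatrix_zero_of_not_injective {k m : ℕ} (N : Matrix (Fin m) (Fin k) R)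
    {r : Fin k → Fin m} (h : ¬ Function.Injective r) : (N.submatrix r id).det = 0 := by
  rw [Function.not_injective_iff] at h
  obtain ⟨i, j, hij, hne⟩ := h
  refine Matrix.det_zero_of_row_eq hne ?_
  funext x
  simp [Matrix.submatrix_apply, hij]

lemma cauchy_binet {k m : ℕ} (M : Matrix (Fin k) (Fin m) R) (N : Matrix (Fin m) (Fin k) R) :
    (M * N).det = ∑ J : {J : Finset (Fin m) // J.card = k},
      (M.submatrix id (J.1.orderEmbOfFin J.2)).det * (N.submatrix (J.1.orderEmbOfFin J.2) id).det := by
  classical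
  rw [det_mul_expand]
  rw [← Finset.sum_filter_add_sum_filter_not Finset.univ (fun r : Fin k → Fin m =>
    Function.Injective r)]
  have h2 : ∑ r ∈ Finset.univ.filter (fun r : Fin k → Fin m => ¬ Function.Injective r),
      (∏ i, M i (r i)) * (N.submatrix r id).det = 0 := by
    refine Finset.sum_eq_zero fun r hr => ?_
    rw [Finset.mem_filter] at hr
    rw [det_submatrix_zero_of_not_injective N hr.2, mul_zero]
  rw [h2, add_zero]
  have hb : ∑ p : {J : Finset (Fin m) // J.card = k} × Equiv.Perm (Fin k),
        (∏ i, M i ((p.1.1.orderEmbOfFin p.1.2) (p.2 i))) *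
          (N.submatrix (fun i => (p.1.1.orderEmbOfFin p.1.2) (p.2 i)) id).det
      = ∑ r ∈ Finset.univ.filter (fun r : Fin k → Fin m => Function.Injective r),
          (∏ i, M i (r i)) * (N.submatrix r id).det := by
    refine Finset.sum_bij (fun p _ => fun i => (p.1.1.orderEmbOfFin p.1.2) (p.2 i))
      (fun p _ => ?_) (fun p _ q _ h => ?_) (fun r hr => ?_) (fun p _ => rfl)
    · rw [Finset.mem_filter]
      exact ⟨Finset.mem_univ _, ((p.1.1.orderEmbOfFin p.1.2).injective).comp p.2.injective⟩
    · -- injectivity of the pair map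
      have h' : (fun i => (p.1.1.orderEmbOfFin p.1.2) (p.2 i))
          = (fun i => (q.1.1.orderEmbOfFin q.1.2) (q.2 i)) := h
      have hJ : p.1 = q.1 := by
        refine Subtype.ext ?_
        ext x
        have hp := Finset.range_orderEmbOfFin p.1.1 p.1.2
        have hq := Finset.range_orderEmbOfFin q.1.1 q.1.2
        constructor
        · intro hx
          have hx' : x ∈ Set.range (p.1.1.orderEmbOfFin p.1.2) := by rw [hp]; exact hx
          obtain ⟨i, hi⟩ := hx'
          have hxq : x = (q.1.1.orderEmbOfFin q.1.2) (q.2 (p.2.symm i)) := by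
            rw [← congrFun h' (p.2.symm i)]
            simp [← hi]
          rw [← Finset.mem_coe, ← hq]
          exact ⟨_, hxq.symm⟩
        · intro hx
          have hx' : x ∈ Set.range (q.1.1.orderEmbOfFin q.1.2) := by rw [hq]; exact hx
          obtain ⟨i, hi⟩ := hx'
          have hxp : x = (p.1.1.orderEmbOfFin p.1.2) (p.2 (q.2.symm i)) := by
            rw [congrFun h' (q.2.symm i)]
            simp [← hi]
          rw [← Finset.mem_coe, ← hp]
          exact ⟨_, hxp.symm⟩
      obtain ⟨⟨J1, h1⟩, σ1⟩ := p
      obtain ⟨⟨J2, h2'⟩, σ2⟩ := q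
      simp only [Subtype.mk.injEq] at hJ
      subst hJ
      simp only [Prod.mk.injEq, Subtype.mk.injEq, true_and] at h' ⊢
      exact Equiv.ext fun i => (J1.orderEmbOfFin h1).injective (congrFun h' i)
    · -- surjectivity
      rw [Finset.mem_filter] at hr
      have hrinj : Function.Injective r := hr.2
      have hJ : (Finset.image r Finset.univ).card = k := by
        rw [Finset.card_image_of_injective _ hrinj, Finset.card_univ, Fintype.card_fin]
      have hmem : ∀ i, r i ∈ Finset.image r Finset.univ :=
        fun i => Finset.mem_image_of_mem r (Finset.mem_univ i)
      set g : Fin k → Fin k :=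
        fun i => ((Finset.image r Finset.univ).orderIsoOfFin hJ).symm ⟨r i, hmem i⟩ with hgdef
      have hginj : Function.Injective g := by
        intro i j hij
        apply hrinj
        have h2 := congrArg ((Finset.image r Finset.univ).orderIsoOfFin hJ) hij
        rw [hgdef] at h2
        simpa [Subtype.ext_iff] using h2
      refine ⟨(⟨_, hJ⟩, Equiv.ofBijective g ((Finite.injective_iff_bijective).mp hginj)),
        Finset.mem_univ _, ?_⟩
      funext i
      show ((Finset.image r Finset.univ).orderEmbOfFin hJ) (g i) = r i
      rw [← Finset.coe_orderIsoOfFin_apply, hgdef]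
      simp
  rw [← hb, Fintype.sum_prod_type]
  refine Finset.sum_congr rfl fun J _ => ?_
  have hsub : ∀ σ : Equiv.Perm (Fin k),
      (N.submatrix (fun i => (J.1.orderEmbOfFin J.2) (σ i)) id)
        = (N.submatrix (J.1.orderEmbOfFin J.2) id).submatrix σ id := by
    intro σ; rfl
  calc ∑ σ : Equiv.Perm (Fin k),
        (∏ i, M i ((J.1.orderEmbOfFin J.2) (σ i))) *
          (N.submatrix (fun i => (J.1.orderEmbOfFin J.2) (σ i)) id).det
      = ∑ σ : Equiv.Perm (Fin k),
          ((((Equiv.Perm.sign σ : ℤ) : R) * ∏ i, (M.submatrix id (J.1.orderEmbOfFin J.2))ᵀ (σ i) i) *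
            (N.submatrix (J.1.orderEmbOfFin J.2) id).det) := by
        refine Finset.sum_congr rfl fun σ _ => ?_
        rw [hsub σ, Matrix.det_permute]
        simp only [Matrix.transpose_apply, Matrix.submatrix_apply, id_eq]
        ring
    _ = (M.submatrix id (J.1.orderEmbOfFin J.2)).det *
          (N.submatrix (J.1.orderEmbOfFin J.2) id).det := by
        rw [← Finset.sum_mul, ← Matrix.det_apply', Matrix.det_transpose]

lemma det_smul_one_add_smul_mul {m : ℕ} (a b : R) (Z Ξ : Matrix (Fin m) (Fin m) R)
    (hΞ : Ξᵀ = Ξ) :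
    (a • (1 : Matrix (Fin m) (Fin m) R) + b • (Z * Ξ)).det
      = ∑ k ∈ Finset.range (m+1), a ^ (m - k) * b ^ k *
          ∑ I : {I : Finset (Fin m) // I.card = k}, ∑ J : {J : Finset (Fin m) // J.card = k},
            (Z.submatrix (I.1.orderEmbOfFin I.2) (J.1.orderEmbOfFin J.2)).det *
              (Ξ.submatrix (I.1.orderEmbOfFin I.2) (J.1.orderEmbOfFin J.2)).det := by
  classical
  rw [det_smul_one_add]
  have hterm : ∀ S : Finset (Fin m),
      (((b • (Z * Ξ)).submatrix (S.orderEmbOfFin rfl) (S.orderEmbOfFin rfl)).det : R)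
      = b ^ S.card * ∑ J : {J : Finset (Fin m) // J.card = S.card},
          (Z.submatrix (S.orderEmbOfFin rfl) (J.1.orderEmbOfFin J.2)).det *
            (Ξ.submatrix (S.orderEmbOfFin rfl) (J.1.orderEmbOfFin J.2)).det := by
    intro S
    have h1 : (b • (Z * Ξ)).submatrix (S.orderEmbOfFin rfl) (S.orderEmbOfFin rfl)
        = b • ((Z * Ξ).submatrix (S.orderEmbOfFin rfl) (S.orderEmbOfFin rfl)) := rfl
    rw [h1, Matrix.det_smul, Fintype.card_fin]
    congr 1
    have h2 : (Z * Ξ).submatrix (S.orderEmbOfFin rfl) (S.orderEmbOfFin rfl)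
        = (Z.submatrix (S.orderEmbOfFin rfl) id) * (Ξ.submatrix id (S.orderEmbOfFin rfl)) := by
      rw [show ((Z.submatrix (S.orderEmbOfFin rfl) id) : Matrix (Fin S.card) (Fin m) R)
          = Z.submatrix (S.orderEmbOfFin rfl) (Equiv.refl (Fin m)) from rfl,
        show ((Ξ.submatrix id (S.orderEmbOfFin rfl)) : Matrix (Fin m) (Fin S.card) R)
          = Ξ.submatrix (Equiv.refl (Fin m)) (S.orderEmbOfFin rfl) from rfl,
        Matrix.submatrix_mul_equiv]
    rw [h2, cauchy_binet]
    refine Finset.sum_congr rfl fun J _ => ?_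
    rw [Matrix.submatrix_submatrix, Matrix.submatrix_submatrix]
    simp only [Function.comp_id, Function.id_comp]
    congr 1
    rw [← Matrix.det_transpose
      (Ξ.submatrix (J.1.orderEmbOfFin J.2) (S.orderEmbOfFin rfl)),
      Matrix.transpose_submatrix, hΞ]
  have hmap : ∀ S ∈ (Finset.univ : Finset (Finset (Fin m))),
      S.card ∈ Finset.range (m+1) := by
    intro S _
    rw [Finset.mem_range, Nat.lt_succ_iff]
    simpa using Finset.card_le_univ S
  rw [← Finset.sum_fiberwise_of_maps_to hmap]
  refine Finset.sum_congr rfl fun k hk => ?_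
  symm
  calc a ^ (m-k) * b ^ k *
        ∑ I : {I : Finset (Fin m) // I.card = k}, ∑ J : {J : Finset (Fin m) // J.card = k},
          (Z.submatrix (I.1.orderEmbOfFin I.2) (J.1.orderEmbOfFin J.2)).det *
            (Ξ.submatrix (I.1.orderEmbOfFin I.2) (J.1.orderEmbOfFin J.2)).det
      = ∑ I : {I : Finset (Fin m) // I.card = k},
          a ^ (m - I.1.card) * (b ^ I.1.card *
            ∑ J : {J : Finset (Fin m) // J.card = I.1.card},
              (Z.submatrix (I.1.orderEmbOfFin rfl) (J.1.orderEmbOfFin J.2)).det *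
                (Ξ.submatrix (I.1.orderEmbOfFin rfl) (J.1.orderEmbOfFin J.2)).det) := by
        rw [Finset.mul_sum]
        refine Finset.sum_congr rfl fun I _ => ?_
        obtain ⟨S, hS⟩ := I
        subst hS
        ring
    _ = ∑ S ∈ Finset.univ.filter (fun S : Finset (Fin m) => S.card = k),
          a ^ (m - S.card) * (b ^ S.card *
            ∑ J : {J : Finset (Fin m) // J.card = S.card},
              (Z.submatrix (S.orderEmbOfFin rfl) (J.1.orderEmbOfFin J.2)).det *
                (Ξ.submatrix (S.orderEmbOfFin rfl) (J.1.orderEmbOfFin J.2)).det) := by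
        exact (Finset.sum_subtype (p := fun S : Finset (Fin m) => S.card = k)
          (Finset.univ.filter (fun S : Finset (Fin m) => S.card = k))
          (fun S => by simp)
          (fun S => a ^ (m - S.card) * (b ^ S.card *
            ∑ J : {J : Finset (Fin m) // J.card = S.card},
              (Z.submatrix (S.orderEmbOfFin rfl) (J.1.orderEmbOfFin J.2)).det *
                (Ξ.submatrix (S.orderEmbOfFin rfl) (J.1.orderEmbOfFin J.2)).det))).symm
    _ = ∑ S ∈ Finset.univ.filter (fun S : Finset (Fin m) => S.card = k),
          a ^ (m - S.card) *
            ((b • (Z * Ξ)).submatrix (S.orderEmbOfFin rfl) (S.orderEmbOfFin rfl)).det := by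
        refine Finset.sum_congr rfl fun S _ => ?_
        rw [hterm S]

lemma det_fromBlocks_scalar₂₂ {p : Type*} [Fintype p] [DecidableEq p]
    (A B C : Matrix p p R) (d : R) :
    (Matrix.fromBlocks A B C (d • (1 : Matrix p p R))).det * (d • (1 : Matrix p p R)).det
      = (d • A - B * C).det * (d • (1 : Matrix p p R)).det := by
  have hmul : Matrix.fromBlocks A B C (d • (1 : Matrix p p R)) *
      Matrix.fromBlocks (d • (1 : Matrix p p R)) 0 (-C) 1
      = Matrix.fromBlocks (d • A - B * C) B 0 (d • (1 : Matrix p p R)) := by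
    rw [Matrix.fromBlocks_multiply]
    simp [Matrix.mul_smul, Matrix.smul_mul, Matrix.mul_neg, sub_eq_add_neg]
  have hdet := congrArg Matrix.det hmul
  rw [Matrix.det_mul, Matrix.det_fromBlocks_zero₁₂, Matrix.det_one, mul_one,
    Matrix.det_fromBlocks_zero₂₁] at hdet
  rw [hdet]

end AuxDet

noncomputable section

namespace Stmt1

/-! ### The polynomial ring `R` in the variables `z i j`, `ξ i j` (`i ≤ j`), `s`, `u` -/

abbrev Var (n : ℕ) := ({p : Fin n × Fin n // p.1 ≤ p.2}) ⊕ (({p : Fin n × Fin n // p.1 ≤ p.2}) ⊕ Bool)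

abbrev R (n : ℕ) := MvPolynomial (Var n) ℂ

/-- `z_{ij}`, extended symmetrically. -/
def zv (n : ℕ) (i j : Fin n) : R n :=
  if h : i ≤ j then MvPolynomial.X (Sum.inl ⟨(i, j), h⟩)
  else MvPolynomial.X (Sum.inl ⟨(j, i), le_of_not_ge h⟩)

/-- `ξ_{ij}`, extended symmetrically. -/
def xiv (n : ℕ) (i j : Fin n) : R n :=
  if h : i ≤ j then MvPolynomial.X (Sum.inr (Sum.inl ⟨(i, j), h⟩))
  else MvPolynomial.X (Sum.inr (Sum.inl ⟨(j, i), le_of_not_ge h⟩))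

/-- `ξ̃_{ij}`: `ξ_{ij}` off the diagonal, `2ξ_{ii}` on the diagonal. -/
def xitv (n : ℕ) (i j : Fin n) : R n :=
  if i = j then 2 * xiv n i j else xiv n i j

def sv (n : ℕ) : R n := MvPolynomial.X (Sum.inr (Sum.inr false))

def uv (n : ℕ) : R n := MvPolynomial.X (Sum.inr (Sum.inr true))

/-- the symmetric matrix `Z` -/
def Zmat (n : ℕ) : Matrix (Fin n) (Fin n) (R n) := Matrix.of fun i j => zv n i j

/-- the symmetric matrix `Ξ̃` -/
def Xitmat (n : ℕ) : Matrix (Fin n) (Fin n) (R n) := Matrix.of fun i j => xitv n i j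

/-- `J_n`: ones on the antidiagonal -/
def Jmat (n : ℕ) : Matrix (Fin n) (Fin n) (R n) :=
  Matrix.of fun i j => if (i : ℕ) + (j : ℕ) + 1 = n then 1 else 0

/-- `γ_k := Σ_{I,J ⊆ [n], |I|=|J|=k} det(z^I_J)·det(ξ̃^I_J)` -/
def gamma (n k : ℕ) : R n :=
  ∑ I : {I : Finset (Fin n) // I.card = k}, ∑ J : {J : Finset (Fin n) // J.card = k},
    ((Zmat n).submatrix (I.1.orderEmbOfFin I.2) (J.1.orderEmbOfFin J.2)).det *
      ((Xitmat n).submatrix (I.1.orderEmbOfFin I.2) (J.1.orderEmbOfFin J.2)).det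

/-- `A(u)` -/
def Amat (n : ℕ) : Matrix (Fin n) (Fin n) (R n) := Matrix.of fun i j =>
  if i = j then
    uv n + ∑ k : Fin n, ∑ l : Fin n, if l ≠ i then zv n k l * xitv n k l else 0
  else -∑ k : Fin n, zv n i k * xitv n j k

/-- `b(u)` -/
def bmat (n : ℕ) : Matrix (Fin n) (Fin n) (R n) := Matrix.of fun i j =>
  -((uv n + sv n) * zv n i j) - ∑ k : Fin n, ∑ l : Fin n,
    (zv n i j * zv n k l - zv n k i * zv n j l) * xitv n k l

/-- `tσ(X)` in `n × n` block form -/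
def tsigma (n : ℕ) : Matrix (Fin n ⊕ Fin n) (Fin n ⊕ Fin n) (R n) :=
  Matrix.fromBlocks (Amat n) (bmat n * Jmat n) (-(Jmat n * Xitmat n))
    (-(Jmat n * (Amat n)ᵀ * Jmat n))


lemma zv_symm (n : ℕ) (i j : Fin n) : zv n i j = zv n j i := by
  unfold zv
  rcases lt_trichotomy i j with hlt | rfl | hlt
  · rw [dif_pos hlt.le, dif_neg (not_le.mpr hlt)]
  · rfl
  · rw [dif_neg (not_le.mpr hlt), dif_pos hlt.le]

lemma xiv_symm (n : ℕ) (i j : Fin n) : xiv n i j = xiv n j i := by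
  unfold xiv
  rcases lt_trichotomy i j with hlt | rfl | hlt
  · rw [dif_pos hlt.le, dif_neg (not_le.mpr hlt)]
  · rfl
  · rw [dif_neg (not_le.mpr hlt), dif_pos hlt.le]

lemma xitv_symm (n : ℕ) (i j : Fin n) : xitv n i j = xitv n j i := by
  unfold xitv
  rcases eq_or_ne i j with rfl | hne
  · rfl
  · rw [if_neg hne, if_neg hne.symm, xiv_symm]

lemma Zmat_transpose (n : ℕ) : (Zmat n)ᵀ = Zmat n := by
  refine Matrix.ext fun i j => ?_
  exact zv_symm n j i

lemma Xitmat_transpose (n : ℕ) : (Xitmat n)ᵀ = Xitmat n := by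
  refine Matrix.ext fun i j => ?_
  exact xitv_symm n j i

lemma singleton_emb (n : ℕ) (i : Fin n) (h : ({i} : Finset (Fin n)).card = 1) :
    ({i} : Finset (Fin n)).orderEmbOfFin h 0 = i :=
  Finset.mem_singleton.mp (Finset.orderEmbOfFin_mem ({i} : Finset (Fin n)) h 0)

lemma gamma_one (n : ℕ) : gamma n 1 = ∑ i : Fin n, ∑ j : Fin n, zv n i j * xitv n i j := by
  unfold gamma
  have hbij : Function.Bijective (fun i : Fin n =>
      (⟨({i} : Finset (Fin n)), Finset.card_singleton i⟩ : {I : Finset (Fin n) // I.card = 1})) := by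
    constructor
    · intro a b hab
      simpa [Subtype.ext_iff] using hab
    · rintro ⟨I, hI⟩
      obtain ⟨a, rfl⟩ := Finset.card_eq_one.mp hI
      exact ⟨a, rfl⟩
  rw [← Fintype.sum_bijective _ hbij _ _ (fun i => rfl)]
  refine Finset.sum_congr rfl fun i _ => ?_
  rw [← Fintype.sum_bijective _ hbij _ _ (fun j => rfl)]
  refine Finset.sum_congr rfl fun j _ => ?_
  rw [Matrix.det_fin_one, Matrix.det_fin_one]
  simp only [Matrix.submatrix_apply, Zmat, Xitmat, Matrix.of_apply, singleton_emb]

lemma Amat_eq (n : ℕ) :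
    Amat n = (uv n + gamma n 1) • (1 : Matrix (Fin n) (Fin n) (R n)) - Zmat n * Xitmat n := by
  refine Matrix.ext fun i j => ?_
  rw [Matrix.sub_apply, Matrix.smul_apply, Matrix.mul_apply, gamma_one]
  by_cases h : i = j
  · subst h
    rw [Matrix.one_apply_eq]
    simp only [Amat, Matrix.of_apply, if_pos rfl, if_true, eq_self_iff_true, Zmat, Xitmat, smul_eq_mul, mul_one]
    have hsplit : ∀ t : Fin n → R n,
        (∑ l, if l ≠ i then t l else 0) = (∑ l, t l) - t i := by
      intro t
      have h1 : (∑ l, t l)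
          = (∑ l, if l ≠ i then t l else 0) + ∑ l, (if l = i then t l else 0) := by
        rw [← Finset.sum_add_distrib]
        refine Finset.sum_congr rfl fun l _ => ?_
        by_cases hl : l = i <;> simp [hl]
      rw [h1, Finset.sum_ite_eq' Finset.univ i t, if_pos (Finset.mem_univ i)]
      ring
    have h2 : ∑ k, ∑ l, (if l ≠ i then zv n k l * xitv n k l else 0)
        = (∑ k, ∑ l, zv n k l * xitv n k l) - ∑ k, zv n k i * xitv n k i := by
      rw [← Finset.sum_sub_distrib]
      exact Finset.sum_congr rfl fun k _ => hsplit _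
    rw [h2]
    have h3 : ∑ k, zv n i k * xitv n k i = ∑ k, zv n k i * xitv n k i := by
      refine Finset.sum_congr rfl fun k _ => ?_
      rw [zv_symm n i k, xitv_symm n k i, xitv_symm n i k]
    rw [h3]
    ring
  · rw [Matrix.one_apply_ne h]
    simp only [Amat, Matrix.of_apply, if_neg h, Zmat, Xitmat, smul_eq_mul, mul_zero]
    have h3 : ∑ k, zv n i k * xitv n k j = ∑ k, zv n i k * xitv n j k := by
      refine Finset.sum_congr rfl fun k _ => ?_
      rw [xitv_symm n k j]
    rw [h3]
    ring

lemma bmat_eq (n : ℕ) :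
    bmat n = Zmat n * Xitmat n * Zmat n - (sv n + (uv n + gamma n 1)) • Zmat n := by
  refine Matrix.ext fun i j => ?_
  rw [Matrix.sub_apply, Matrix.smul_apply, gamma_one]
  simp only [bmat, Matrix.of_apply, Matrix.mul_apply, Zmat, Xitmat, smul_eq_mul]
  have h1 : ∑ k, ∑ l, (zv n i j * zv n k l - zv n k i * zv n j l) * xitv n k l
      = (zv n i j * ∑ k, ∑ l, zv n k l * xitv n k l)
        - ∑ k, ∑ l, zv n k i * zv n j l * xitv n k l := by
    rw [Finset.mul_sum, ← Finset.sum_sub_distrib]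
    refine Finset.sum_congr rfl fun k _ => ?_
    rw [Finset.mul_sum, ← Finset.sum_sub_distrib]
    refine Finset.sum_congr rfl fun l _ => ?_
    ring
  have h2 : ∑ l, (∑ k, zv n i k * xitv n k l) * zv n l j
      = ∑ k, ∑ l, zv n k i * zv n j l * xitv n k l := by
    simp_rw [Finset.sum_mul]
    rw [Finset.sum_comm]
    refine Finset.sum_congr rfl fun k _ => Finset.sum_congr rfl fun l _ => ?_
    rw [zv_symm n i k, zv_symm n l j]
    ring
  rw [h1, h2]
  ring


lemma Jmat_mul_Jmat (n : ℕ) : Jmat n * Jmat n = 1 := by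
  refine Matrix.ext fun i j => ?_
  rw [Matrix.mul_apply]
  simp only [Jmat, Matrix.of_apply, ite_mul, one_mul, zero_mul]
  by_cases h : i = j
  · subst h
    rw [Matrix.one_apply_eq]
    have hi : (i : ℕ) < n := i.isLt
    rw [Finset.sum_eq_single (⟨n - 1 - (i : ℕ), by omega⟩ : Fin n)]
    · have h1 : (i : ℕ) + ((⟨n - 1 - (i : ℕ), by omega⟩ : Fin n) : ℕ) + 1 = n := by
        simp only []
        omega
      have h2 : ((⟨n - 1 - (i : ℕ), by omega⟩ : Fin n) : ℕ) + (i : ℕ) + 1 = n := by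
        simp only []
        omega
      rw [if_pos h1, if_pos h2]
    · intro b _ hb
      by_cases hc : (i : ℕ) + (b : ℕ) + 1 = n
      · exact absurd (Fin.ext (show (b : ℕ) = n - 1 - (i : ℕ) by omega)) hb
      · rw [if_neg hc]
    · intro hmem
      exact absurd (Finset.mem_univ _) hmem
  · rw [Matrix.one_apply_ne h]
    refine Finset.sum_eq_zero fun k _ => ?_
    by_cases hc : (i : ℕ) + (k : ℕ) + 1 = n
    · rw [if_pos hc]
      have : ¬ ((k : ℕ) + (j : ℕ) + 1 = n) := by
        intro hc2
        exact h (Fin.ext (by omega))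
      rw [if_neg this]
    · rw [if_neg hc]

lemma Amat_transpose (n : ℕ) :
    (Amat n)ᵀ = (uv n + gamma n 1) • (1 : Matrix (Fin n) (Fin n) (R n))
      - Xitmat n * Zmat n := by
  rw [Amat_eq, Matrix.transpose_sub, Matrix.transpose_smul, Matrix.transpose_one,
    Matrix.transpose_mul, Zmat_transpose, Xitmat_transpose]

lemma key1 (n : ℕ) :
    tsigma n * Matrix.fromBlocks 1 (Zmat n * Jmat n) 0 1
      = Matrix.fromBlocks (Amat n) ((-(sv n)) • (Zmat n * Jmat n))
          (-(Jmat n * Xitmat n)) ((-(uv n + gamma n 1)) • 1) := by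
  unfold tsigma
  rw [Matrix.fromBlocks_multiply]
  have hTL : Amat n * 1 + bmat n * Jmat n * 0 = Amat n := by
    rw [Matrix.mul_one, Matrix.mul_zero, add_zero]
  have hBL : -(Jmat n * Xitmat n) * 1 + -(Jmat n * (Amat n)ᵀ * Jmat n) * 0
      = -(Jmat n * Xitmat n) := by
    rw [Matrix.mul_one, Matrix.mul_zero, add_zero]
  have hTR : Amat n * (Zmat n * Jmat n) + bmat n * Jmat n * 1
      = (-(sv n)) • (Zmat n * Jmat n) := by
    rw [Matrix.mul_one, Amat_eq, bmat_eq]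
    rw [Matrix.sub_mul, Matrix.smul_mul, Matrix.one_mul]
    rw [Matrix.sub_mul, Matrix.smul_mul]
    rw [Matrix.mul_assoc (Zmat n * Xitmat n)]
    module
  have hBR : -(Jmat n * Xitmat n) * (Zmat n * Jmat n) + -(Jmat n * (Amat n)ᵀ * Jmat n) * 1
      = (-(uv n + gamma n 1)) • (1 : Matrix (Fin n) (Fin n) (R n)) := by
    rw [Matrix.mul_one, Amat_transpose]
    rw [Matrix.mul_sub, Matrix.sub_mul]
    rw [Matrix.mul_smul, Matrix.mul_one, Matrix.smul_mul]
    have hassoc : Jmat n * (Xitmat n * Zmat n) * Jmat n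
        = Jmat n * Xitmat n * (Zmat n * Jmat n) := by
      rw [Matrix.mul_assoc, Matrix.mul_assoc, Matrix.mul_assoc]
    rw [hassoc]
    have hJJ : (uv n + gamma n 1) • (Jmat n * Jmat n)
        = (uv n + gamma n 1) • (1 : Matrix (Fin n) (Fin n) (R n)) := by
      rw [Jmat_mul_Jmat]
    rw [hJJ, Matrix.neg_mul]
    module
  rw [hTL, hTR, hBL, hBR]

lemma c_ne_zero (n : ℕ) : uv n + gamma n 1 ≠ 0 := by
  intro h
  have hev := congrArg (MvPolynomial.eval
    (fun v : Var n => match v with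
      | Sum.inr (Sum.inr true) => (1 : ℂ)
      | _ => 0)) h
  rw [map_add, map_zero] at hev
  have h1 : MvPolynomial.eval
      (fun v : Var n => match v with
        | Sum.inr (Sum.inr true) => (1 : ℂ)
        | _ => 0) (uv n) = 1 := by
    rw [uv, MvPolynomial.eval_X]
  have h2 : MvPolynomial.eval
      (fun v : Var n => match v with
        | Sum.inr (Sum.inr true) => (1 : ℂ)
        | _ => 0) (gamma n 1) = 0 := by
    rw [gamma_one, map_sum]
    refine Finset.sum_eq_zero fun i _ => ?_
    rw [map_sum]
    refine Finset.sum_eq_zero fun j _ => ?_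
    rw [_root_.map_mul]
    have : MvPolynomial.eval
        (fun v : Var n => match v with
          | Sum.inr (Sum.inr true) => (1 : ℂ)
          | _ => 0) (zv n i j) = 0 := by
      unfold zv
      split_ifs <;> rw [MvPolynomial.eval_X]
    rw [this, zero_mul]
  rw [h1, h2, add_zero] at hev
  exact one_ne_zero hev


/-- `det(tσ(X)) = (−1)^n Σ_{k=0}^{n} (u+γ₁)^{2n−2k} (s−(u+γ₁))^k γ_k`. -/
theorem det_tsigma (n : ℕ) (hn : 1 ≤ n) :
    (tsigma n).det =
      (-1) ^ n * ∑ k ∈ Finset.range (n + 1),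
        (uv n + gamma n 1) ^ (2 * n - 2 * k) * (sv n - (uv n + gamma n 1)) ^ k *
          gamma n k := by
  classical
  have hstep1 : (tsigma n).det
      = (Matrix.fromBlocks (Amat n) ((-(sv n)) • (Zmat n * Jmat n))
          (-(Jmat n * Xitmat n)) ((-(uv n + gamma n 1)) • 1)).det := by
    have hdet1 : (Matrix.fromBlocks (1 : Matrix (Fin n) (Fin n) (R n)) (Zmat n * Jmat n)
        (0 : Matrix (Fin n) (Fin n) (R n)) 1).det = 1 := by
      rw [Matrix.det_fromBlocks_zero₂₁, Matrix.det_one, mul_one]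
    calc (tsigma n).det = (tsigma n).det * 1 := (mul_one _).symm
      _ = (tsigma n * Matrix.fromBlocks 1 (Zmat n * Jmat n) 0 1).det := by
          rw [Matrix.det_mul, hdet1]
      _ = _ := by rw [key1]
  have hscalar := AuxDet.det_fromBlocks_scalar₂₂ (Amat n)
    ((-(sv n)) • (Zmat n * Jmat n)) (-(Jmat n * Xitmat n)) (-(uv n + gamma n 1))
  have hBC : (-(uv n + gamma n 1)) • Amat n
      - ((-(sv n)) • (Zmat n * Jmat n)) * (-(Jmat n * Xitmat n))
      = (-((uv n + gamma n 1) * (uv n + gamma n 1))) • (1 : Matrix (Fin n) (Fin n) (R n))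
        + ((uv n + gamma n 1) - sv n) • (Zmat n * Xitmat n) := by
    rw [Amat_eq]
    rw [Matrix.smul_mul, Matrix.mul_neg]
    have hZJJX : (Zmat n * Jmat n) * (Jmat n * Xitmat n) = Zmat n * Xitmat n := by
      rw [Matrix.mul_assoc, ← Matrix.mul_assoc (Jmat n), Jmat_mul_Jmat, Matrix.one_mul]
    rw [hZJJX]
    module
  have hdetc : ((-(uv n + gamma n 1)) • (1 : Matrix (Fin n) (Fin n) (R n))).det
      = (-(uv n + gamma n 1)) ^ n := by
    rw [Matrix.det_smul, Matrix.det_one, mul_one, Fintype.card_fin]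
  have hne : ((-(uv n + gamma n 1)) ^ n : R n) ≠ 0 := by
    apply pow_ne_zero
    exact neg_ne_zero.mpr (c_ne_zero n)
  have hmain : (tsigma n).det * (-(uv n + gamma n 1)) ^ n
      = ((-((uv n + gamma n 1) * (uv n + gamma n 1))) • (1 : Matrix (Fin n) (Fin n) (R n))
          + ((uv n + gamma n 1) - sv n) • (Zmat n * Xitmat n)).det
        * (-(uv n + gamma n 1)) ^ n := by
    rw [hstep1, ← hdetc, hscalar, hBC]
  have hdet := mul_right_cancel₀ hne hmain
  rw [hdet, AuxDet.det_smul_one_add_smul_mul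
    (-((uv n + gamma n 1) * (uv n + gamma n 1))) ((uv n + gamma n 1) - sv n)
    (Zmat n) (Xitmat n) (Xitmat_transpose n)]
  rw [Finset.mul_sum]
  refine Finset.sum_congr rfl fun k hk => ?_
  have hkn : k ≤ n := Nat.lt_succ_iff.mp (Finset.mem_range.mp hk)
  have hG : (∑ I : {I : Finset (Fin n) // I.card = k}, ∑ J : {J : Finset (Fin n) // J.card = k},
      ((Zmat n).submatrix (I.1.orderEmbOfFin I.2) (J.1.orderEmbOfFin J.2)).det *
        ((Xitmat n).submatrix (I.1.orderEmbOfFin I.2) (J.1.orderEmbOfFin J.2)).det)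
      = gamma n k := rfl
  rw [hG]
  have e1 : (-((uv n + gamma n 1) * (uv n + gamma n 1)))
      = (-1 : R n) * (uv n + gamma n 1) ^ 2 := by ring
  have e2 : ((uv n + gamma n 1) - sv n) = (-1 : R n) * (sv n - (uv n + gamma n 1)) := by ring
  rw [e1, e2, mul_pow, mul_pow, ← pow_mul]
  have h2 : 2 * (n - k) = 2 * n - 2 * k := by omega
  rw [h2]
  have hsign : (-1 : R n) ^ (n - k) * (-1 : R n) ^ k = (-1 : R n) ^ n := by
    rw [← pow_add, Nat.sub_add_cancel hkn]
  calc (-1 : R n) ^ (n - k) * (uv n + gamma n 1) ^ (2 * n - 2 * k) *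
        ((-1 : R n) ^ k * (sv n - (uv n + gamma n 1)) ^ k) * gamma n k
      = ((-1 : R n) ^ (n - k) * (-1 : R n) ^ k) *
          ((uv n + gamma n 1) ^ (2 * n - 2 * k) * (sv n - (uv n + gamma n 1)) ^ k *
            gamma n k) := by ring
    _ = (-1 : R n) ^ n * ((uv n + gamma n 1) ^ (2 * n - 2 * k) *
          (sv n - (uv n + gamma n 1)) ^ k * gamma n k) := by rw [hsign]

end Stmt1
end
end

section
/- Let g := [[1_n, Z·J_n],[0, 1_n]] ∈ GL_{2n}(R) (block form with n×n blocks). Then g^{−1}·tσ(X)·g = [[(u+γ_1)·1_n, −(s−(u+γ_1))·Z·J_n],[J_n·Ξ, −(u+γ_1)·1_n]]. -/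
open Matrix BigOperators

noncomputable section

namespace Stmt3

/-! ### The polynomial ring `R` in the variables `z i j`, `ξ i j` (`i < j`), `s`, `u` -/

abbrev Var (n : ℕ) := ({p : Fin n × Fin n // p.1 < p.2}) ⊕ (({p : Fin n × Fin n // p.1 < p.2}) ⊕ Bool)

abbrev R (n : ℕ) := MvPolynomial (Var n) ℂ

def zv (n : ℕ) (i j : Fin n) : R n :=
  if h : i < j then MvPolynomial.X (Sum.inl ⟨(i, j), h⟩)
  else if h' : j < i then -MvPolynomial.X (Sum.inl ⟨(j, i), h'⟩)
  else 0

def xiv (n : ℕ) (i j : Fin n) : R n :=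
  if h : i < j then MvPolynomial.X (Sum.inr (Sum.inl ⟨(i, j), h⟩))
  else if h' : j < i then -MvPolynomial.X (Sum.inr (Sum.inl ⟨(j, i), h'⟩))
  else 0

def sv (n : ℕ) : R n := MvPolynomial.X (Sum.inr (Sum.inr false))

def uv (n : ℕ) : R n := MvPolynomial.X (Sum.inr (Sum.inr true))

def Zmat (n : ℕ) : Matrix (Fin n) (Fin n) (R n) := Matrix.of fun i j => zv n i j

def Ximat (n : ℕ) : Matrix (Fin n) (Fin n) (R n) := Matrix.of fun i j => xiv n i j

/-- `J_n`: ones on the antidiagonal -/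
def Jmat (n : ℕ) : Matrix (Fin n) (Fin n) (R n) :=
  Matrix.of fun i j => if (i : ℕ) + (j : ℕ) + 1 = n then 1 else 0

/-- `γ₁ := Σ_{i<j} z_{ij} ξ_{ij}` -/
def gamma1 (n : ℕ) : R n :=
  ∑ i : Fin n, ∑ j : Fin n, if i < j then zv n i j * xiv n i j else 0

/-- `A(u)` -/
def Amat (n : ℕ) : Matrix (Fin n) (Fin n) (R n) := Matrix.of fun i j =>
  if i = j then
    uv n + ∑ k : Fin n, ∑ l : Fin n,
      if k < l ∧ k ≠ i ∧ l ≠ i then zv n k l * xiv n k l else 0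
  else -∑ k : Fin n, zv n k i * xiv n k j

/-- `b(u)` (the given formula is alternating in `(i,j)`, so we use it for all `i, j`) -/
def bmat (n : ℕ) : Matrix (Fin n) (Fin n) (R n) := Matrix.of fun i j =>
  -((uv n + sv n) * zv n i j) - ∑ k : Fin n, ∑ l : Fin n,
    if k < l ∧ k ≠ i ∧ k ≠ j ∧ l ≠ i ∧ l ≠ j then
      (zv n i j * zv n k l - zv n i k * zv n j l + zv n i l * zv n j k) * xiv n k l
    else 0

/-- `tσ(X)` in `n × n` block form -/
def tsigma (n : ℕ) : Matrix (Fin n ⊕ Fin n) (Fin n ⊕ Fin n) (R n) :=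
  Matrix.fromBlocks (Amat n) (bmat n * Jmat n) (Jmat n * Ximat n)
    (-(Jmat n * (Amat n)ᵀ * Jmat n))

/-- `g := [[1, Z·J_n], [0, 1]]` -/
def gmat (n : ℕ) : Matrix (Fin n ⊕ Fin n) (Fin n ⊕ Fin n) (R n) :=
  Matrix.fromBlocks 1 (Zmat n * Jmat n) 0 1


/-! ### Auxiliary lemmas -/

lemma zv_same (n : ℕ) (i : Fin n) : zv n i i = 0 := by simp [zv]
lemma xiv_same (n : ℕ) (i : Fin n) : xiv n i i = 0 := by simp [xiv]

lemma zv_swap (n : ℕ) (i j : Fin n) : zv n i j = -zv n j i := by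
  unfold zv
  rcases lt_trichotomy i j with h | h | h
  · rw [dif_pos h, dif_neg (asymm h), dif_pos h, neg_neg]
  · subst h; simp
  · rw [dif_neg (asymm h), dif_pos h, dif_pos h]

lemma xiv_swap (n : ℕ) (i j : Fin n) : xiv n i j = -xiv n j i := by
  unfold xiv
  rcases lt_trichotomy i j with h | h | h
  · rw [dif_pos h, dif_neg (asymm h), dif_pos h, neg_neg]
  · subst h; simp
  · rw [dif_neg (asymm h), dif_pos h, dif_pos h]

lemma Jmat_apply (n : ℕ) (i j : Fin n) : Jmat n i j = if j = Fin.rev i then 1 else 0 := by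
  have h1 := i.isLt; have h2 := j.isLt
  have : ((i : ℕ) + (j : ℕ) + 1 = n) ↔ j = Fin.rev i := by
    rw [Fin.ext_iff, Fin.val_rev]; omega
  simp [Jmat, this]

lemma JJ (n : ℕ) : Jmat n * Jmat n = 1 := by
  ext i j : 1
  rw [Matrix.mul_apply, Finset.sum_eq_single (Fin.rev i)]
  · simp [Jmat_apply, Matrix.one_apply, Fin.rev_rev, eq_comm]
  · intro b _ hb; simp [Jmat_apply, hb]
  · intro h; exact absurd (Finset.mem_univ _) h

lemma sum_split {α : Type*} [LinearOrder α] [Fintype α] {M : Type*} [AddCommMonoid M]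
    (f : α → α → M) (hf : ∀ k, f k k = 0) :
    ∑ k, ∑ l, f k l = ∑ k, ∑ l, if k < l then f k l + f l k else 0 := by
  have key : ∀ k l : α, f k l = (if k < l then f k l else 0) + (if l < k then f k l else 0) := by
    intro k l
    rcases lt_trichotomy k l with h | h | h
    · simp [h, asymm h]
    · subst h; simp [hf]
    · simp [h, asymm h]
  calc ∑ k, ∑ l, f k l
      = ∑ k, ∑ l, ((if k < l then f k l else 0) + (if l < k then f k l else 0)) := by
        simp_rw [← key]
    _ = (∑ k, ∑ l, if k < l then f k l else 0) + (∑ k, ∑ l, if l < k then f k l else 0) := by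
        simp [Finset.sum_add_distrib]
    _ = (∑ k, ∑ l, if k < l then f k l else 0) + (∑ k, ∑ l, if k < l then f l k else 0) := by
        congr 1; rw [Finset.sum_comm]
    _ = ∑ k, ∑ l, if k < l then f k l + f l k else 0 := by
        rw [← Finset.sum_add_distrib]
        refine Finset.sum_congr rfl fun k _ => ?_
        rw [← Finset.sum_add_distrib]
        refine Finset.sum_congr rfl fun l _ => ?_
        split <;> simp

lemma zx_symm (n : ℕ) (i j : Fin n) : zv n j i * xiv n j i = zv n i j * xiv n i j := by
  rw [zv_swap n j i, xiv_swap n j i]; ring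

lemma gamma_split (n : ℕ) (i : Fin n) :
    gamma1 n = (∑ k : Fin n, ∑ l : Fin n,
        if k < l ∧ k ≠ i ∧ l ≠ i then zv n k l * xiv n k l else 0) +
      ∑ k : Fin n, zv n i k * xiv n i k := by
  unfold gamma1
  have hpt : ∀ k l : Fin n, (if k < l then zv n k l * xiv n k l else 0) =
      (if k < l ∧ k ≠ i ∧ l ≠ i then zv n k l * xiv n k l else 0) +
      ((if k < l ∧ k = i then zv n k l * xiv n k l else 0) +
       (if k < l ∧ l = i then zv n k l * xiv n k l else 0)) := by
    intro k l
    by_cases hkl : k < l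
    · by_cases hk : k = i
      · have hl : ¬ l = i := fun hl => absurd (hk.trans hl.symm) hkl.ne
        simp [hkl, hk, hl]
      · by_cases hl : l = i <;> simp [hkl, hk, hl]
    · simp [hkl]
  rw [Finset.sum_congr rfl fun k _ => Finset.sum_congr rfl fun l _ => hpt k l]
  simp only [Finset.sum_add_distrib]
  congr 1
  have e2 : ∀ k : Fin n, (∑ l : Fin n, if k < l ∧ k = i then zv n k l * xiv n k l else 0)
      = if k = i then (∑ l : Fin n, if i < l then zv n i l * xiv n i l else 0) else 0 := by
    intro k
    by_cases hk : k = i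
    · subst hk; simp
    · simp [hk]
  have e3 : ∀ k l : Fin n, (if k < l ∧ l = i then zv n k l * xiv n k l else 0)
      = if l = i then (if k < i then zv n k i * xiv n k i else 0) else 0 := by
    intro k l
    by_cases hl : l = i
    · subst hl; simp
    · simp [hl]
  rw [Finset.sum_congr rfl fun k _ => e2 k, Finset.sum_ite_eq' Finset.univ i]
  rw [Finset.sum_congr rfl fun k _ => (Finset.sum_congr rfl fun l _ => e3 k l),
    Finset.sum_congr rfl fun k _ => Finset.sum_ite_eq' Finset.univ i
      (fun _ => if k < i then zv n k i * xiv n k i else 0)]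
  simp only [Finset.mem_univ, if_true]
  rw [← Finset.sum_add_distrib]
  refine Finset.sum_congr rfl fun k _ => ?_
  rcases lt_trichotomy i k with h | h | h
  · simp [h, asymm h]
  · subst h; simp [zv_same]
  · simp [h, asymm h, zx_symm]

lemma hA (n : ℕ) : Amat n = (uv n + gamma1 n) • 1 + Zmat n * Ximat n := by
  ext i j : 1
  simp only [Amat, Matrix.add_apply, Matrix.smul_apply, Matrix.one_apply, Matrix.mul_apply,
    Matrix.of_apply, smul_eq_mul, Zmat, Ximat]
  by_cases h : i = j
  · subst h
    rw [if_pos rfl, if_pos rfl, mul_one, gamma_split n i]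
    have e : ∀ k : Fin n, zv n i k * xiv n k i = -(zv n i k * xiv n i k) := fun k => by
      rw [xiv_swap n k i]; ring
    rw [Finset.sum_congr rfl fun k _ => e k, Finset.sum_neg_distrib]
    ring
  · rw [if_neg h, if_neg h, mul_zero]
    have e : ∀ k : Fin n, zv n i k * xiv n k j = -(zv n k i * xiv n k j) := fun k => by
      rw [zv_swap n i k]; ring
    rw [Finset.sum_congr rfl fun k _ => e k, Finset.sum_neg_distrib]
    ring

lemma hZT (n : ℕ) : (Zmat n)ᵀ = -Zmat n := by
  ext i j : 1
  simp only [Matrix.transpose_apply, Matrix.neg_apply, Zmat, Matrix.of_apply]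
  exact zv_swap n j i

lemma hXiT (n : ℕ) : (Ximat n)ᵀ = -Ximat n := by
  ext i j : 1
  simp only [Matrix.transpose_apply, Matrix.neg_apply, Ximat, Matrix.of_apply]
  exact xiv_swap n j i

lemma hAT (n : ℕ) : (Amat n)ᵀ = (uv n + gamma1 n) • 1 + Ximat n * Zmat n := by
  rw [hA, Matrix.transpose_add, Matrix.transpose_smul, Matrix.transpose_one,
    Matrix.transpose_mul, hZT, hXiT, Matrix.neg_mul, Matrix.mul_neg, neg_neg]

lemma hb (n : ℕ) :
    bmat n = -((uv n + sv n) • Zmat n) - (gamma1 n • Zmat n + Zmat n * (Ximat n * Zmat n)) := by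
  ext i j : 1
  simp only [bmat, Matrix.sub_apply, Matrix.add_apply, Matrix.neg_apply, Matrix.smul_apply,
    Matrix.mul_apply, Matrix.of_apply, smul_eq_mul, Zmat, Ximat]
  have key : (∑ k : Fin n, ∑ l : Fin n,
      if k < l ∧ k ≠ i ∧ k ≠ j ∧ l ≠ i ∧ l ≠ j then
        (zv n i j * zv n k l - zv n i k * zv n j l + zv n i l * zv n j k) * xiv n k l
      else 0)
      = gamma1 n * zv n i j + ∑ k : Fin n, zv n i k * ∑ l : Fin n, xiv n k l * zv n l j := by
    have stepA : ∀ k l : Fin n,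
        (if k < l ∧ k ≠ i ∧ k ≠ j ∧ l ≠ i ∧ l ≠ j then
          (zv n i j * zv n k l - zv n i k * zv n j l + zv n i l * zv n j k) * xiv n k l else 0)
        = (if k < l then
          (zv n i j * zv n k l - zv n i k * zv n j l + zv n i l * zv n j k) * xiv n k l else 0) := by
      intro k l
      by_cases hkl : k < l
      · by_cases hk : k = i
        · have : (zv n i j * zv n k l - zv n i k * zv n j l + zv n i l * zv n j k) = 0 := by
            rw [hk, zv_same, zv_swap n j i]; ring
          simp [hkl, this]
        by_cases hk' : k = j
        · have : (zv n i j * zv n k l - zv n i k * zv n j l + zv n i l * zv n j k) = 0 := by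
            rw [hk', zv_same]; ring
          simp [hkl, this]
        by_cases hl : l = i
        · have : (zv n i j * zv n k l - zv n i k * zv n j l + zv n i l * zv n j k) = 0 := by
            rw [hl, zv_same, zv_swap n k i, zv_swap n j i]; ring
          simp [hkl, this]
        by_cases hl' : l = j
        · have : (zv n i j * zv n k l - zv n i k * zv n j l + zv n i l * zv n j k) = 0 := by
            rw [hl', zv_same, zv_swap n k j]; ring
          simp [hkl, this]
        · simp [hkl, hk, hk', hl, hl']
      · simp [hkl]
    rw [Finset.sum_congr rfl fun k _ => Finset.sum_congr rfl fun l _ => stepA k l]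
    have hg : gamma1 n * zv n i j
        = ∑ k : Fin n, ∑ l : Fin n,
            if k < l then zv n k l * xiv n k l * zv n i j else 0 := by
      unfold gamma1
      rw [Finset.sum_mul]
      refine Finset.sum_congr rfl fun k _ => ?_
      rw [Finset.sum_mul]
      refine Finset.sum_congr rfl fun l _ => ?_
      split <;> simp
    have hd : (∑ k : Fin n, zv n i k * ∑ l : Fin n, xiv n k l * zv n l j)
        = ∑ k : Fin n, ∑ l : Fin n,
            if k < l then zv n i k * (xiv n k l * zv n l j) + zv n i l * (xiv n l k * zv n k j)
            else 0 := by
      have hd1 : (∑ k : Fin n, zv n i k * ∑ l : Fin n, xiv n k l * zv n l j)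
          = ∑ k : Fin n, ∑ l : Fin n, zv n i k * (xiv n k l * zv n l j) :=
        Finset.sum_congr rfl fun k _ => Finset.mul_sum _ _ _
      rw [hd1]
      exact sum_split (fun k l => zv n i k * (xiv n k l * zv n l j))
        (fun k => by simp [xiv_same])
    rw [hg, hd, ← Finset.sum_add_distrib]
    refine Finset.sum_congr rfl fun k _ => ?_
    rw [← Finset.sum_add_distrib]
    refine Finset.sum_congr rfl fun l _ => ?_
    by_cases hkl : k < l
    · simp only [hkl, if_pos]
      rw [zv_swap n l j, zv_swap n k j, xiv_swap n l k]; ring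
    · simp [hkl]
  rw [key]

/-- `g ∈ GL_{2n}(R)` and
`g⁻¹·tσ(X)·g = [[(u+γ₁)·1, −(s−(u+γ₁))·Z·J_n], [J_n·Ξ, −(u+γ₁)·1]]`. -/
theorem conj_tsigma (n : ℕ) (hn : 1 ≤ n) :
    IsUnit (gmat n).det ∧
    (gmat n)⁻¹ * tsigma n * gmat n =
      Matrix.fromBlocks ((uv n + gamma1 n) • 1)
        (-((sv n - (uv n + gamma1 n)) • (Zmat n * Jmat n)))
        (Jmat n * Ximat n) (-((uv n + gamma1 n) • 1)) := by
  have hdet : (gmat n).det = 1 := by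
    rw [gmat, Matrix.det_fromBlocks_zero₂₁]; simp
  have hJJ2 : ∀ M : Matrix (Fin n) (Fin n) (R n), Jmat n * (Jmat n * M) = M := by
    intro M; rw [← Matrix.mul_assoc, JJ, Matrix.one_mul]
  refine ⟨hdet ▸ isUnit_one, ?_⟩
  have hinv : (gmat n)⁻¹ = Matrix.fromBlocks 1 (-(Zmat n * Jmat n)) 0 1 := by
    apply Matrix.inv_eq_right_inv
    rw [gmat, Matrix.fromBlocks_multiply]
    simp [Matrix.fromBlocks_one]
  rw [hinv, tsigma, Matrix.fromBlocks_multiply, gmat, Matrix.fromBlocks_multiply,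
    Matrix.fromBlocks_inj]
  refine ⟨?_, ?_, ?_, ?_⟩ <;>
    simp only [hAT] <;>
    simp only [hA, hb, Matrix.one_mul, Matrix.mul_one, Matrix.zero_mul, Matrix.mul_zero,
      add_zero, zero_add, Matrix.neg_mul, Matrix.mul_neg, neg_neg, Matrix.add_mul,
      Matrix.mul_add, Matrix.sub_mul, Matrix.mul_sub, smul_mul_assoc, mul_smul_comm,
      Matrix.mul_assoc, hJJ2, JJ] <;>
    module


end Stmt3
end
end

section
/- Let g := [[1_p, Z],[0, 1_q]] ∈ GL_{p+q}(R) (block form with blocks of sizes p and q). Then g^{−1}·σ(X)·g = [[(q/(p+q))s·1_p, 0],[C, −(p/(p+q))s·1_q]], where C is the bottom-left block of σ(X), i.e. C_{ij} = −ξ_{ji}. -/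
open Matrix BigOperators

noncomputable section

namespace Stmt7

/-! ### The polynomial ring `R` in the variables `z i j`, `ξ i j` (`i ∈ [p]`, `j ∈ [q]`), `s` -/

abbrev Var (p q : ℕ) := (Fin p × Fin q) ⊕ ((Fin p × Fin q) ⊕ Unit)

abbrev R (p q : ℕ) := MvPolynomial (Var p q) ℂ

def zv (p q : ℕ) (i : Fin p) (j : Fin q) : R p q := MvPolynomial.X (Sum.inl (i, j))

def xiv (p q : ℕ) (i : Fin p) (j : Fin q) : R p q := MvPolynomial.X (Sum.inr (Sum.inl (i, j)))

def sv (p q : ℕ) : R p q := MvPolynomial.X (Sum.inr (Sum.inr ()))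

/-- `(p/(p+q))·s` -/
def psv (p q : ℕ) : R p q := MvPolynomial.C ((p : ℂ) / ((p : ℂ) + (q : ℂ))) * sv p q

/-- `(q/(p+q))·s` -/
def qsv (p q : ℕ) : R p q := MvPolynomial.C ((q : ℂ) / ((p : ℂ) + (q : ℂ))) * sv p q

/-- the `p × q` matrix `Z` -/
def Zmat (p q : ℕ) : Matrix (Fin p) (Fin q) (R p q) := Matrix.of fun i j => zv p q i j

/-- `A` with `A_{ij} := (q/(p+q))s·δ_{ij} − Σ_{l∈[q]} z_{il} ξ_{jl}` -/
def Amat (p q : ℕ) : Matrix (Fin p) (Fin p) (R p q) := Matrix.of fun i j =>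
  (if i = j then qsv p q else 0) - ∑ l : Fin q, zv p q i l * xiv p q j l

/-- `B` with `B_{ij} := −s·z_{ij} + Σ_{k∈[p], l∈[q]} z_{kj} z_{il} ξ_{kl}` -/
def Bmat (p q : ℕ) : Matrix (Fin p) (Fin q) (R p q) := Matrix.of fun i j =>
  -(sv p q * zv p q i j) + ∑ k : Fin p, ∑ l : Fin q, zv p q k j * zv p q i l * xiv p q k l

/-- `C` with `C_{ij} := −ξ_{ji}` -/
def Cmat (p q : ℕ) : Matrix (Fin q) (Fin p) (R p q) := Matrix.of fun i j => -xiv p q j i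

/-- `D` with `D_{ij} := −(p/(p+q))s·δ_{ij} + Σ_{k∈[p]} z_{kj} ξ_{ki}` -/
def Dmat (p q : ℕ) : Matrix (Fin q) (Fin q) (R p q) := Matrix.of fun i j =>
  -(if i = j then psv p q else 0) + ∑ k : Fin p, zv p q k j * xiv p q k i

/-- `σ(X)` in block form -/
def sigma (p q : ℕ) : Matrix (Fin p ⊕ Fin q) (Fin p ⊕ Fin q) (R p q) :=
  Matrix.fromBlocks (Amat p q) (Bmat p q) (Cmat p q) (Dmat p q)

/-- `g := [[1_p, Z], [0, 1_q]]` -/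
def gmat (p q : ℕ) : Matrix (Fin p ⊕ Fin q) (Fin p ⊕ Fin q) (R p q) :=
  Matrix.fromBlocks 1 (Zmat p q) 0 1

/-- `g ∈ GL_{p+q}(R)` and
`g⁻¹·σ(X)·g = [[(q/(p+q))s·1_p, 0], [C, −(p/(p+q))s·1_q]]`. -/
theorem conj_sigma (p q : ℕ) (hq : 1 ≤ q) (hpq : q ≤ p) :
    IsUnit (gmat p q).det ∧
    (gmat p q)⁻¹ * sigma p q * gmat p q =
      Matrix.fromBlocks (qsv p q • 1) 0 (Cmat p q) (-(psv p q • 1)) := by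

  have hdet : IsUnit (gmat p q).det := by
    rw [gmat, Matrix.det_fromBlocks_zero₂₁, Matrix.det_one, Matrix.det_one, one_mul]
    exact isUnit_one
  refine ⟨hdet, ?_⟩
  have hpq0 : (p : ℂ) + (q : ℂ) ≠ 0 := by
    rw [← Nat.cast_add, Nat.cast_ne_zero]; omega
  have key : sigma p q * gmat p q = gmat p q *
      Matrix.fromBlocks (qsv p q • 1) 0 (Cmat p q) (-(psv p q • 1)) := by
    rw [sigma, gmat, Matrix.fromBlocks_multiply, Matrix.fromBlocks_multiply,
      Matrix.fromBlocks_inj]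
    refine ⟨?_, ?_, ?_, ?_⟩
    all_goals simp only [Matrix.mul_one, Matrix.one_mul, Matrix.mul_zero, Matrix.zero_mul,
      add_zero, zero_add]
    · -- A = qsv•1 + Z*C
      apply Matrix.ext; intro i j
      simp only [Matrix.add_apply, Matrix.smul_apply, Matrix.one_apply, smul_eq_mul,
        Matrix.mul_apply, Matrix.of_apply, Amat, Cmat, Zmat, mul_ite, mul_one, mul_zero]
      rw [sub_eq_add_neg, ← Finset.sum_neg_distrib]
      congr 1
      apply Finset.sum_congr rfl; intros; ring
    · -- A*Z + B = -(psv • Z)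
      apply Matrix.ext; intro i j
      simp only [Matrix.add_apply, Matrix.mul_apply, Matrix.of_apply, Amat, Bmat, Zmat,
        Matrix.neg_apply, Matrix.smul_apply, smul_eq_mul, sub_mul, Finset.sum_sub_distrib,
        Finset.sum_mul, ite_mul, zero_mul, Finset.sum_ite_eq, Finset.mem_univ, if_true,
        Matrix.one_apply, mul_ite, mul_one, mul_zero, mul_neg, neg_zero,
        Finset.sum_ite_eq', Finset.sum_neg_distrib]
      have h1 : (∑ x : Fin p, ∑ l : Fin q, zv p q i l * xiv p q x l * zv p q x j)
          = ∑ k : Fin p, ∑ l : Fin q, zv p q k j * zv p q i l * xiv p q k l := by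
        apply Finset.sum_congr rfl; intro k _
        apply Finset.sum_congr rfl; intro l _; ring
      rw [h1]
      have h2 : qsv p q - sv p q = -psv p q := by
        have hc : (q : ℂ) / ((p : ℂ) + (q : ℂ)) - 1 = -((p : ℂ) / ((p : ℂ) + (q : ℂ))) := by
          field_simp
          ring
        rw [qsv, psv]
        calc MvPolynomial.C ((q : ℂ) / ((p : ℂ) + (q : ℂ))) * sv p q - sv p q
            = MvPolynomial.C ((q : ℂ) / ((p : ℂ) + (q : ℂ)) - 1) * sv p q := by
              rw [MvPolynomial.C_sub, MvPolynomial.C_1]; ring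
          _ = _ := by rw [hc, MvPolynomial.C_neg]; ring
      linear_combination zv p q i j * h2
    · -- C*Z + D = -(psv•1)
      apply Matrix.ext; intro i j
      simp only [Matrix.add_apply, Matrix.mul_apply, Matrix.of_apply, Cmat, Dmat, Zmat,
        Matrix.neg_apply, Matrix.smul_apply, Matrix.one_apply, smul_eq_mul, mul_ite,
        mul_one, mul_zero]
      have h : (∑ k : Fin p, -xiv p q k i * zv p q k j)
          = -∑ k : Fin p, zv p q k j * xiv p q k i := by
        rw [← Finset.sum_neg_distrib]
        apply Finset.sum_congr rfl; intros; ring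
      rw [h]; ring
  calc (gmat p q)⁻¹ * sigma p q * gmat p q
      = (gmat p q)⁻¹ * (sigma p q * gmat p q) := by rw [mul_assoc]
    _ = (gmat p q)⁻¹ * (gmat p q * Matrix.fromBlocks (qsv p q • 1) 0 (Cmat p q) (-(psv p q • 1))) := by rw [key]
    _ = _ := by rw [← mul_assoc, Matrix.nonsing_inv_mul _ hdet, one_mul]


end Stmt7
end
end

section
/- Let p, q ≥ 1, let R be a commutative ring, let u, v ∈ R, and let b be a p×q matrix and c a q×p matrix over R. Then det([[u·1_p, b],[c, v·1_q]]) = Σ_{k=0}^{min(p,q)} (−1)^k · u^{p−k} · v^{q−k} · Σ_{I⊆[p], J⊆[q], |I|=|J|=k} det(b_{I,J})·det(c_{J,I}), where b_{I,J} denotes the submatrix of b with rows indexed by I and columns by J, and c_{J,I} the submatrix of c with rows indexed by J and columns by I. -/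
open Matrix BigOperators

noncomputable section

namespace Stmt10

section Aux

variable {R : Type*} [CommRing R]


lemma det_J (k : ℕ) :
    (Matrix.fromBlocks (0 : Matrix (Fin k) (Fin k) R) (1 : Matrix (Fin k) (Fin k) R)
      (1 : Matrix (Fin k) (Fin k) R) (0 : Matrix (Fin k) (Fin k) R)).det = (-1) ^ k := by
  have h : (Matrix.fromBlocks (0 : Matrix (Fin k) (Fin k) R) (1 : Matrix (Fin k) (Fin k) R)
      (1 : Matrix (Fin k) (Fin k) R) (0 : Matrix (Fin k) (Fin k) R)) =
      Matrix.fromBlocks 1 1 0 1 * Matrix.fromBlocks 1 0 (-1) 1 *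
        Matrix.fromBlocks 1 1 0 1 * Matrix.fromBlocks (-1) 0 0 1 := by
    simp [Matrix.fromBlocks_multiply]
  rw [h]
  simp [det_mul, det_fromBlocks_zero₂₁, det_fromBlocks_zero₁₂, det_neg]

lemma det_offdiag (k : ℕ) (B C : Matrix (Fin k) (Fin k) R) :
    (Matrix.fromBlocks 0 B C 0).det = (-1) ^ k * (B.det * C.det) := by
  have h : (Matrix.fromBlocks (0 : Matrix (Fin k) (Fin k) R) B C 0) =
      Matrix.fromBlocks B 0 0 C * Matrix.fromBlocks 0 1 1 0 := by
    simp [Matrix.fromBlocks_multiply]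
  rw [h, det_mul, det_fromBlocks_zero₁₂, det_J]
  ring


/-- The 0/1-pattern matrix appearing after multilinear expansion. -/
def auxN {p q : ℕ} (b : Matrix (Fin p) (Fin q) R) (c : Matrix (Fin q) (Fin p) R)
    (I : Finset (Fin p)) (J : Finset (Fin q)) :
    Matrix (Fin p ⊕ Fin q) (Fin p ⊕ Fin q) R :=
  Matrix.fromBlocks
    (Matrix.of fun i i' => if i ∈ I then 0 else (1 : Matrix (Fin p) (Fin p) R) i i')
    (Matrix.of fun i j' => if i ∈ I then b i j' else 0)
    (Matrix.of fun j i' => if j ∈ J then c j i' else 0)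
    (Matrix.of fun j j' => if j ∈ J then 0 else (1 : Matrix (Fin q) (Fin q) R) j j')


lemma auxN_det_eq_zero {p q : ℕ} (hp : 1 ≤ p) (hq : 1 ≤ q)
    (b : Matrix (Fin p) (Fin q) R) (c : Matrix (Fin q) (Fin p) R)
    (I : Finset (Fin p)) (J : Finset (Fin q)) (h : I.card ≠ J.card) :
    (auxN b c I J).det = 0 := by
  classical
  rw [det_apply]
  refine Finset.sum_eq_zero fun σ _ => ?_
  suffices h' : ∃ x, auxN b c I J (σ x) x = 0 by
    obtain ⟨x, hx⟩ := h'
    rw [Finset.prod_eq_zero (f := fun i => auxN b c I J (σ i) i) (Finset.mem_univ x) hx,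
      smul_zero]
  by_contra hc
  push_neg at hc
  -- fixed points off I and off J
  have fix1 : ∀ i : Fin p, i ∉ I → σ.symm (Sum.inl i) = Sum.inl i := by
    intro i hi
    have h1 := hc (σ.symm (Sum.inl i))
    rw [Equiv.apply_symm_apply] at h1
    rcases hx : σ.symm (Sum.inl i) with i' | j'
    · rw [hx] at h1
      simp only [auxN, fromBlocks_apply₁₁, Matrix.of_apply, if_neg hi, Matrix.one_apply] at h1
      split at h1
      · subst ‹i = i'›; rfl
      · simp at h1
    · rw [hx] at h1
      simp [auxN, if_neg hi] at h1
  have fix2 : ∀ j : Fin q, j ∉ J → σ.symm (Sum.inr j) = Sum.inr j := by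
    intro j hj
    have h1 := hc (σ.symm (Sum.inr j))
    rw [Equiv.apply_symm_apply] at h1
    rcases hx : σ.symm (Sum.inr j) with i' | j'
    · rw [hx] at h1
      simp [auxN, if_neg hj] at h1
    · rw [hx] at h1
      simp only [auxN, fromBlocks_apply₂₂, Matrix.of_apply, if_neg hj, Matrix.one_apply] at h1
      split at h1
      · subst ‹j = j'›; rfl
      · simp at h1
  -- for i ∈ I, σ.symm (inl i) lands in inr J
  have hF : ∀ i ∈ I, ∃ j, j ∈ J ∧ σ.symm (Sum.inl i) = Sum.inr j := by
    intro i hi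
    have h1 := hc (σ.symm (Sum.inl i))
    rw [Equiv.apply_symm_apply] at h1
    rcases hx : σ.symm (Sum.inl i) with i' | j'
    · rw [hx] at h1
      simp [auxN, if_pos hi] at h1
    · refine ⟨j', ?_, rfl⟩
      by_contra hj'
      have h2 := fix2 j' hj'
      have := σ.symm.injective (hx.trans h2.symm)
      simp at this
  have hG : ∀ j ∈ J, ∃ i, i ∈ I ∧ σ.symm (Sum.inr j) = Sum.inl i := by
    intro j hj
    have h1 := hc (σ.symm (Sum.inr j))
    rw [Equiv.apply_symm_apply] at h1
    rcases hx : σ.symm (Sum.inr j) with i' | j'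
    · refine ⟨i', ?_, rfl⟩
      by_contra hi'
      have h2 := fix1 i' hi'
      have := σ.symm.injective (hx.trans h2.symm)
      simp at this
    · rw [hx] at h1
      simp [auxN, if_pos hj] at h1
  -- build injections
  have key1 : I.card ≤ J.card := by
    refine Finset.card_le_card_of_injOn
      (fun i => Sum.elim (fun _ => (⟨0, hq⟩ : Fin q)) id (σ.symm (Sum.inl i))) ?_ ?_
    · intro i hi
      obtain ⟨j, hj, hx⟩ := hF i hi
      simp [hx, hj]
    · intro i1 h1 i2 h2 he
      obtain ⟨j1, _, hx1⟩ := hF i1 (Finset.mem_coe.mp h1)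
      obtain ⟨j2, _, hx2⟩ := hF i2 (Finset.mem_coe.mp h2)
      simp only [hx1, hx2, Sum.elim_inr, id_eq] at he
      have : σ.symm (Sum.inl i1) = σ.symm (Sum.inl i2) := by rw [hx1, hx2, he]
      simpa using σ.symm.injective this
  have key2 : J.card ≤ I.card := by
    refine Finset.card_le_card_of_injOn
      (fun j => Sum.elim id (fun _ => (⟨0, hp⟩ : Fin p)) (σ.symm (Sum.inr j))) ?_ ?_
    · intro j hj
      obtain ⟨i, hi, hx⟩ := hG j hj
      simp [hx, hi]
    · intro j1 h1 j2 h2 he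
      obtain ⟨i1, _, hx1⟩ := hG j1 (Finset.mem_coe.mp h1)
      obtain ⟨i2, _, hx2⟩ := hG j2 (Finset.mem_coe.mp h2)
      simp only [hx1, hx2, Sum.elim_inl, id_eq] at he
      have : σ.symm (Sum.inr j1) = σ.symm (Sum.inr j2) := by rw [hx1, hx2, he]
      simpa using σ.symm.injective this
  exact h (le_antisymm key1 key2)


lemma auxN_det_eq {p q : ℕ} (b : Matrix (Fin p) (Fin q) R) (c : Matrix (Fin q) (Fin p) R)
    {k : ℕ} (I : Finset (Fin p)) (J : Finset (Fin q)) (hI : I.card = k) (hJ : J.card = k) :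
    (auxN b c I J).det =
      (-1) ^ k * ((b.submatrix (I.orderEmbOfFin hI) (J.orderEmbOfFin hJ)).det *
        (c.submatrix (J.orderEmbOfFin hJ) (I.orderEmbOfFin hI)).det) := by
  classical
  let eI : Fin k ≃ {x // x ∈ I} := (I.orderIsoOfFin hI).toEquiv
  let eJ : Fin k ≃ {x // x ∈ J} := (J.orderIsoOfFin hJ).toEquiv
  let EI : {i // i ∉ I} ⊕ Fin k ≃ Fin p :=
    (Equiv.sumComm _ _).trans ((Equiv.sumCongr eI (Equiv.refl _)).trans
      (Equiv.sumCompl (· ∈ I)))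
  let EJ : {j // j ∉ J} ⊕ Fin k ≃ Fin q :=
    (Equiv.sumComm _ _).trans ((Equiv.sumCongr eJ (Equiv.refl _)).trans
      (Equiv.sumCompl (· ∈ J)))
  let H : (({i // i ∉ I} ⊕ {j // j ∉ J}) ⊕ (Fin k ⊕ Fin k)) ≃ (Fin p ⊕ Fin q) :=
    (Equiv.sumSumSumComm _ _ _ _).trans (Equiv.sumCongr EI EJ)
  have hH1 : ∀ i : {i // i ∉ I}, H (Sum.inl (Sum.inl i)) = Sum.inl i.1 := by
    intro i; simp [H, EI, Equiv.sumCompl_apply_inr]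
  have hH2 : ∀ j : {j // j ∉ J}, H (Sum.inl (Sum.inr j)) = Sum.inr j.1 := by
    intro j; simp [H, EJ, Equiv.sumCompl_apply_inr]
  have hH3 : ∀ s : Fin k, H (Sum.inr (Sum.inl s)) = Sum.inl (I.orderEmbOfFin hI s) := by
    intro s
    simp [H, EI, eI, Equiv.sumCompl_apply_inl, Finset.coe_orderIsoOfFin_apply]
  have hH4 : ∀ t : Fin k, H (Sum.inr (Sum.inr t)) = Sum.inr (J.orderEmbOfFin hJ t) := by
    intro t
    simp [H, EJ, eJ, Equiv.sumCompl_apply_inl, Finset.coe_orderIsoOfFin_apply]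
  rw [← Matrix.det_submatrix_equiv_self H]
  have hEq : (auxN b c I J).submatrix H H =
      Matrix.fromBlocks 1 0
        (Matrix.fromBlocks
          (Matrix.of fun s (i : {i // i ∉ I}) => (0 : R))
          (Matrix.of fun s (j : {j // j ∉ J}) => b (I.orderEmbOfFin hI s) j.1)
          (Matrix.of fun t (i : {i // i ∉ I}) => c (J.orderEmbOfFin hJ t) i.1)
          (Matrix.of fun t (j : {j // j ∉ J}) => (0 : R)))
        (Matrix.fromBlocks 0 (b.submatrix (I.orderEmbOfFin hI) (J.orderEmbOfFin hJ))
          (c.submatrix (J.orderEmbOfFin hJ) (I.orderEmbOfFin hI)) 0) := by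
    ext x y
    have hne1 : ∀ (i : {i // i ∉ I}) (s : Fin k), (i : Fin p) ≠ I.orderEmbOfFin hI s :=
      fun i s hc => i.2 (hc ▸ Finset.orderEmbOfFin_mem I hI s)
    have hne2 : ∀ (j : {j // j ∉ J}) (t : Fin k), (j : Fin q) ≠ J.orderEmbOfFin hJ t :=
      fun j t hc => j.2 (hc ▸ Finset.orderEmbOfFin_mem J hJ t)
    rcases x with (i | j) | (s | t) <;> rcases y with (i' | j') | (s' | t')
    · simp [auxN, hH1, Matrix.one_apply, i.2, Subtype.coe_inj]
    · simp [auxN, hH1, hH2, Matrix.one_apply, i.2]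
    · simp [auxN, hH1, hH3, Matrix.one_apply, i.2, hne1 i s']
    · simp [auxN, hH1, hH4, i.2]
    · simp [auxN, hH1, hH2, Matrix.one_apply, j.2]
    · simp [auxN, hH2, Matrix.one_apply, j.2, Subtype.coe_inj]
    · simp [auxN, hH2, hH3, j.2]
    · simp [auxN, hH2, hH4, Matrix.one_apply, j.2, hne2 j t']
    · simp [auxN, hH3, hH1, Finset.orderEmbOfFin_mem]
    · simp [auxN, hH3, hH2, Finset.orderEmbOfFin_mem]
    · simp [auxN, hH3, Finset.orderEmbOfFin_mem]
    · simp [auxN, hH3, hH4, Finset.orderEmbOfFin_mem]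
    · simp [auxN, hH4, hH1, Finset.orderEmbOfFin_mem]
    · simp [auxN, hH4, hH2, Finset.orderEmbOfFin_mem]
    · simp [auxN, hH4, hH3, Finset.orderEmbOfFin_mem]
    · simp [auxN, hH4, Finset.orderEmbOfFin_mem]
  rw [hEq, Matrix.det_fromBlocks_zero₁₂, det_one, one_mul, det_offdiag]


end Aux

/-- The minor summation formula for the determinant of
`[[u·1_p, b], [c, v·1_q]]`. -/
theorem det_blocks {R : Type*} [CommRing R] (p q : ℕ) (hp : 1 ≤ p) (hq : 1 ≤ q)
    (u v : R) (b : Matrix (Fin p) (Fin q) R) (c : Matrix (Fin q) (Fin p) R) :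
    (Matrix.fromBlocks (u • 1) b c (v • 1)).det =
      ∑ k ∈ Finset.range (min p q + 1),
        (-1 : R) ^ k * u ^ (p - k) * v ^ (q - k) *
          ∑ I : {I : Finset (Fin p) // I.card = k},
            ∑ J : {J : Finset (Fin q) // J.card = k},
              (b.submatrix (I.1.orderEmbOfFin I.2) (J.1.orderEmbOfFin J.2)).det *
                (c.submatrix (J.1.orderEmbOfFin J.2) (I.1.orderEmbOfFin I.2)).det := by
  set X : Matrix (Fin p ⊕ Fin q) (Fin p ⊕ Fin q) R := Matrix.fromBlocks (u • 1) 0 0 (v • 1)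
    with hX
  set Y : Matrix (Fin p ⊕ Fin q) (Fin p ⊕ Fin q) R := Matrix.fromBlocks 0 b c 0 with hY
  let Xf : (Fin p ⊕ Fin q) → (Fin p ⊕ Fin q) → R := fun i j => X i j
  let Yf : (Fin p ⊕ Fin q) → (Fin p ⊕ Fin q) → R := fun i j => Y i j
  have hM : Matrix.fromBlocks (u • (1 : Matrix (Fin p) (Fin p) R)) b c (v • 1) = Y + X := by
    rw [hX, hY, Matrix.fromBlocks_add]
    simp
  -- Step 1 : multilinear expansion over the rows
  have step1 : (Matrix.fromBlocks (u • (1 : Matrix (Fin p) (Fin p) R)) b c (v • 1)).det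
      = ∑ s : Finset (Fin p ⊕ Fin q), Matrix.det (Matrix.of (s.piecewise Yf Xf)) := by
    rw [hM]
    exact Matrix.detRowAlternating.toMultilinearMap.map_add_univ Yf Xf
  -- Step 2 : reindex the sum by pairs of finsets
  let E : Finset (Fin p) × Finset (Fin q) ≃ Finset (Fin p ⊕ Fin q) :=
  { toFun := fun z => z.1.disjSum z.2
    invFun := fun s => (s.toLeft, s.toRight)
    left_inv := fun z => by simp
    right_inv := fun s => by simp [Finset.toLeft_disjSum_toRight] }
  have step2 : (∑ s : Finset (Fin p ⊕ Fin q), Matrix.det (Matrix.of (s.piecewise Yf Xf)))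
      = ∑ I : Finset (Fin p), ∑ J : Finset (Fin q),
          Matrix.det (Matrix.of ((I.disjSum J).piecewise Yf Xf)) := by
    rw [← Equiv.sum_comp E (fun s => Matrix.det (Matrix.of (s.piecewise Yf Xf))),
      Fintype.sum_prod_type]
    rfl
  -- Step 3 : evaluate each term
  have hprod : ∀ (m : ℕ) (S : Finset (Fin m)) (w : R),
      (∏ i : Fin m, if i ∈ S then 1 else w) = w ^ (m - S.card) := by
    intro m S w
    rw [Finset.prod_ite, Finset.prod_const_one, one_mul, Finset.prod_const]
    congr 1
    rw [show Finset.univ.filter (fun i => ¬ i ∈ S) = Sᶜ by ext x; simp,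
      Finset.card_compl, Fintype.card_fin]
  have step3 : ∀ (I : Finset (Fin p)) (J : Finset (Fin q)),
      Matrix.det (Matrix.of ((I.disjSum J).piecewise Yf Xf))
        = u ^ (p - I.card) * v ^ (q - J.card) * (auxN b c I J).det := by
    intro I J
    have hD : Matrix.of ((I.disjSum J).piecewise Yf Xf)
        = Matrix.diagonal (Sum.elim (fun i => if i ∈ I then (1 : R) else u)
            (fun j => if j ∈ J then 1 else v)) * auxN b c I J := by
      ext x y
      rcases x with i | j
      · by_cases hi : i ∈ I <;> rcases y with i' | j' <;>
          simp [Finset.piecewise, Xf, Yf, hX, hY, auxN, hi, Matrix.diagonal_mul, Matrix.one_apply]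
      · by_cases hj : j ∈ J <;> rcases y with i' | j' <;>
          simp [Finset.piecewise, Xf, Yf, hX, hY, auxN, hj, Matrix.diagonal_mul, Matrix.one_apply]
    rw [hD, Matrix.det_mul, Matrix.det_diagonal, Fintype.prod_sum_type]
    simp only [Sum.elim_inl, Sum.elim_inr, hprod]
  -- Step 4 : regroup the sum
  rw [step1, step2]
  simp only [step3]
  -- kill mismatched cardinalities
  have h5 : ∀ I : Finset (Fin p),
      (∑ J : Finset (Fin q), u ^ (p - I.card) * v ^ (q - J.card) * (auxN b c I J).det)
        = ∑ J ∈ Finset.univ.filter (fun J : Finset (Fin q) => J.card = I.card),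
            u ^ (p - I.card) * v ^ (q - J.card) * (auxN b c I J).det := by
    intro I
    refine (Finset.sum_subset (Finset.filter_subset _ _) fun J _ hJ => ?_).symm
    have hne : I.card ≠ J.card := by
      intro h
      exact hJ (Finset.mem_filter.mpr ⟨Finset.mem_univ _, h.symm⟩)
    rw [auxN_det_eq_zero hp hq b c I J hne, mul_zero]
  simp only [h5]
  -- group by cardinality
  rw [← Finset.sum_fiberwise_of_maps_to
    (fun (I : Finset (Fin p)) _ => Finset.mem_range_succ_iff.mpr
      ((Finset.card_le_univ I).trans_eq (Finset.card_fin p)))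
    (fun I => ∑ J ∈ Finset.univ.filter (fun J : Finset (Fin q) => J.card = I.card),
      u ^ (p - I.card) * v ^ (q - J.card) * (auxN b c I J).det)]
  -- replace I.card by k inside fibers
  have h6 : ∀ k ∈ Finset.range (p + 1),
      (∑ I ∈ Finset.univ.filter (fun I : Finset (Fin p) => I.card = k),
        ∑ J ∈ Finset.univ.filter (fun J : Finset (Fin q) => J.card = I.card),
          u ^ (p - I.card) * v ^ (q - J.card) * (auxN b c I J).det)
      = ∑ I ∈ Finset.univ.filter (fun I : Finset (Fin p) => I.card = k),
        ∑ J ∈ Finset.univ.filter (fun J : Finset (Fin q) => J.card = k),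
          u ^ (p - k) * v ^ (q - J.card) * (auxN b c I J).det := by
    intro k _
    refine Finset.sum_congr rfl fun I hI => ?_
    rw [(Finset.mem_filter.mp hI).2]
  rw [Finset.sum_congr rfl h6]
  -- restrict the range
  rw [← Finset.sum_subset (Finset.range_subset_range.mpr (by omega :
      min p q + 1 ≤ p + 1)) ?vanish]
  case vanish =>
    intro k hk hk'
    have hq' : q < k := by
      simp only [Finset.mem_range] at hk hk'
      omega
    have : Finset.univ.filter (fun J : Finset (Fin q) => J.card = k) = ∅ := by
      refine Finset.filter_eq_empty_iff.mpr fun J _ => ?_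
      have := (Finset.card_le_univ J).trans_eq (Finset.card_fin q)
      omega
    simp [this]
  -- per-k identification
  refine Finset.sum_congr rfl fun k hk => ?_
  rw [Finset.sum_subtype (p := fun I : Finset (Fin p) => I.card = k)
    (Finset.univ.filter (fun I : Finset (Fin p) => I.card = k))
    (fun I => by simp) (fun I => ∑ J ∈ Finset.univ.filter
      (fun J : Finset (Fin q) => J.card = k),
      u ^ (p - k) * v ^ (q - J.card) * (auxN b c I J).det)]
  rw [Finset.mul_sum]
  refine Finset.sum_congr rfl fun I _ => ?_
  rw [Finset.sum_subtype (p := fun J : Finset (Fin q) => J.card = k)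
    (Finset.univ.filter (fun J : Finset (Fin q) => J.card = k))
    (fun J => by simp) (fun J =>
      u ^ (p - k) * v ^ (q - J.card) * (auxN b c I.1 J).det)]
  rw [Finset.mul_sum]
  refine Finset.sum_congr rfl fun J _ => ?_
  rw [auxN_det_eq b c I.1 J.1 I.2 J.2, J.2]
  ring

end Stmt10
end
end

section
/- Set z := Z·J_n and C := J_n·Ξ. Then the blocks of tσ(X) satisfy: A(u) = (u+γ_1)·1_n + zC, b(u)·J_n = −(u+s+γ_1)·z − zCz, and Cz + (−J_n·A(u)ᵀ·J_n) = −(u+γ_1)·1_n. -/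
open Matrix BigOperators

noncomputable section

namespace Stmt12

/-! ### The polynomial ring `R` in the variables `z i j`, `ξ i j` (`i < j`), `s`, `u` -/

abbrev Var (n : ℕ) := ({p : Fin n × Fin n // p.1 < p.2}) ⊕ (({p : Fin n × Fin n // p.1 < p.2}) ⊕ Bool)

abbrev R (n : ℕ) := MvPolynomial (Var n) ℂ

def zv (n : ℕ) (i j : Fin n) : R n :=
  if h : i < j then MvPolynomial.X (Sum.inl ⟨(i, j), h⟩)
  else if h' : j < i then -MvPolynomial.X (Sum.inl ⟨(j, i), h'⟩)
  else 0

def xiv (n : ℕ) (i j : Fin n) : R n :=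
  if h : i < j then MvPolynomial.X (Sum.inr (Sum.inl ⟨(i, j), h⟩))
  else if h' : j < i then -MvPolynomial.X (Sum.inr (Sum.inl ⟨(j, i), h'⟩))
  else 0

def sv (n : ℕ) : R n := MvPolynomial.X (Sum.inr (Sum.inr false))

def uv (n : ℕ) : R n := MvPolynomial.X (Sum.inr (Sum.inr true))

def Zmat (n : ℕ) : Matrix (Fin n) (Fin n) (R n) := Matrix.of fun i j => zv n i j

def Ximat (n : ℕ) : Matrix (Fin n) (Fin n) (R n) := Matrix.of fun i j => xiv n i j

/-- `J_n`: ones on the antidiagonal -/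
def Jmat (n : ℕ) : Matrix (Fin n) (Fin n) (R n) :=
  Matrix.of fun i j => if (i : ℕ) + (j : ℕ) + 1 = n then 1 else 0

/-- `γ₁ := Σ_{i<j} z_{ij} ξ_{ij}` -/
def gamma1 (n : ℕ) : R n :=
  ∑ i : Fin n, ∑ j : Fin n, if i < j then zv n i j * xiv n i j else 0

/-- `A(u)` -/
def Amat (n : ℕ) : Matrix (Fin n) (Fin n) (R n) := Matrix.of fun i j =>
  if i = j then
    uv n + ∑ k : Fin n, ∑ l : Fin n,
      if k < l ∧ k ≠ i ∧ l ≠ i then zv n k l * xiv n k l else 0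
  else -∑ k : Fin n, zv n k i * xiv n k j

/-- `b(u)` (the given formula is alternating in `(i,j)`, so we use it for all `i, j`) -/
def bmat (n : ℕ) : Matrix (Fin n) (Fin n) (R n) := Matrix.of fun i j =>
  -((uv n + sv n) * zv n i j) - ∑ k : Fin n, ∑ l : Fin n,
    if k < l ∧ k ≠ i ∧ k ≠ j ∧ l ≠ i ∧ l ≠ j then
      (zv n i j * zv n k l - zv n i k * zv n j l + zv n i l * zv n j k) * xiv n k l
    else 0

/-- `tσ(X)` in `n × n` block form -/
def tsigma (n : ℕ) : Matrix (Fin n ⊕ Fin n) (Fin n ⊕ Fin n) (R n) :=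
  Matrix.fromBlocks (Amat n) (bmat n * Jmat n) (Jmat n * Ximat n)
    (-(Jmat n * (Amat n)ᵀ * Jmat n))


section Lemmas

variable (n : ℕ)

lemma zv_diag (i : Fin n) : zv n i i = 0 := by
  simp [zv]

lemma xiv_diag (i : Fin n) : xiv n i i = 0 := by
  simp [xiv]

lemma zv_antisymm (i j : Fin n) : zv n j i = - zv n i j := by
  unfold zv
  rcases lt_trichotomy i j with h | rfl | h
  · rw [dif_neg (asymm h), dif_pos h, dif_pos h]
  · simp
  · rw [dif_pos h, dif_neg (asymm h), dif_pos h, neg_neg]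

lemma xiv_antisymm (i j : Fin n) : xiv n j i = - xiv n i j := by
  unfold xiv
  rcases lt_trichotomy i j with h | rfl | h
  · rw [dif_neg (asymm h), dif_pos h, dif_pos h]
  · simp
  · rw [dif_pos h, dif_neg (asymm h), dif_pos h, neg_neg]

lemma Jmat_apply (i j : Fin n) : Jmat n i j = if j = Fin.rev i then 1 else 0 := by
  have hi := i.isLt
  have hj := j.isLt
  simp only [Jmat, Matrix.of_apply]
  by_cases h : (i : ℕ) + (j : ℕ) + 1 = n
  · rw [if_pos h, if_pos (by ext; rw [Fin.val_rev]; omega)]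
  · rw [if_neg h, if_neg (by intro hh; apply h; have := congrArg Fin.val hh; rw [Fin.val_rev] at this; omega)]

lemma Jmat_mul_Jmat : Jmat n * Jmat n = 1 := by
  apply Matrix.ext
  intro i j
  rw [Matrix.mul_apply, Matrix.one_apply]
  rw [Finset.sum_eq_single (Fin.rev i)]
  · rw [Jmat_apply, Jmat_apply, if_pos rfl, one_mul, Fin.rev_rev]
    by_cases h : i = j <;> simp [h, eq_comm]
  · intro b _ hb
    rw [Jmat_apply, if_neg hb, zero_mul]
  · intro h
    exact absurd (Finset.mem_univ _) h

lemma sum_pairs (g : Fin n → Fin n → R n) (hg : ∀ k, g k k = 0) :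
    ∑ k, ∑ l, g k l = ∑ k, ∑ l, if k < l then g k l + g l k else 0 := by
  have h1 : ∀ k l : Fin n, g k l =
      (if k < l then g k l else 0) + (if l < k then g k l else 0) := by
    intro k l
    rcases lt_trichotomy k l with h | rfl | h
    · simp [h, asymm h]
    · simp [hg]
    · simp [h, asymm h]
  have step : ∑ k, ∑ l, g k l =
      (∑ k, ∑ l, if k < l then g k l else 0) + ∑ k, ∑ l, if l < k then g k l else 0 := by
    rw [← Finset.sum_add_distrib]
    refine Finset.sum_congr rfl fun k _ => ?_
    rw [← Finset.sum_add_distrib]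
    exact Finset.sum_congr rfl fun l _ => h1 k l
  rw [step, Finset.sum_comm (f := fun k l => if l < k then g k l else 0),
    ← Finset.sum_add_distrib]
  refine Finset.sum_congr rfl fun k _ => ?_
  rw [← Finset.sum_add_distrib]
  refine Finset.sum_congr rfl fun l _ => ?_
  by_cases h : k < l <;> simp [h]

end Lemmas


section Main

variable (n : ℕ)

lemma Zmat_transpose : (Zmat n)ᵀ = -(Zmat n) := by
  apply Matrix.ext
  intro i j
  exact zv_antisymm n i j

lemma Ximat_transpose : (Ximat n)ᵀ = -(Ximat n) := by
  apply Matrix.ext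
  intro i j
  exact xiv_antisymm n i j

lemma Amat_eq : Amat n = (uv n + gamma1 n) • 1 + Zmat n * Ximat n := by
  apply Matrix.ext
  intro i j
  simp only [Amat, Matrix.of_apply, Matrix.add_apply, Matrix.smul_apply, Matrix.one_apply,
    Matrix.mul_apply, Zmat, Ximat, smul_eq_mul]
  by_cases h : i = j
  · subst h
    rw [if_pos rfl, if_pos rfl, mul_one]
    have key : (∑ k : Fin n, ∑ l : Fin n, if k < l then zv n k l * xiv n k l else 0)
        = (∑ k : Fin n, ∑ l : Fin n, if k < l ∧ k ≠ i ∧ l ≠ i then zv n k l * xiv n k l else 0)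
          + ∑ k : Fin n, zv n k i * xiv n k i := by
      have hp := sum_pairs n (fun k l => if l = i then zv n k l * xiv n k l else 0)
        (fun k => by by_cases h : k = i <;> simp [h, zv_diag])
      have hleft : (∑ k : Fin n, ∑ l : Fin n, if l = i then zv n k l * xiv n k l else 0)
          = ∑ k : Fin n, zv n k i * xiv n k i :=
        Finset.sum_congr rfl fun k _ => by
          rw [Finset.sum_ite_eq' Finset.univ i, if_pos (Finset.mem_univ i)]
      rw [hleft] at hp
      rw [hp, ← Finset.sum_add_distrib]
      refine Finset.sum_congr rfl fun k _ => ?_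
      rw [← Finset.sum_add_distrib]
      refine Finset.sum_congr rfl fun l _ => ?_
      by_cases hkl : k < l
      · simp only [if_pos hkl]
        by_cases hk : k = i
        · have hl : l ≠ i := fun hh => (lt_irrefl k (by rw [← hk] at hh; rw [hh] at hkl; exact hkl))
          rw [if_neg (by simp [hk]), if_neg hl, if_pos hk]
          rw [zv_antisymm n k l, xiv_antisymm n k l]
          ring
        · by_cases hl : l = i
          · rw [if_neg (by simp [hl]), if_pos hl, if_neg hk]
            ring
          · rw [if_pos ⟨hkl, hk, hl⟩, if_neg hl, if_neg hk]
            ring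
      · simp only [if_neg hkl, if_neg (fun h : k < l ∧ k ≠ i ∧ l ≠ i => hkl h.1)]
        ring
    have hcan : (∑ k : Fin n, zv n i k * xiv n k i) = -∑ k : Fin n, zv n k i * xiv n k i := by
      rw [← Finset.sum_neg_distrib]
      refine Finset.sum_congr rfl fun k _ => ?_
      rw [zv_antisymm n k i]
      ring
    simp only [gamma1]
    rw [key, hcan]
    ring
  · rw [if_neg h, if_neg h, mul_zero, zero_add]
    have : ∀ k : Fin n, zv n i k * xiv n k j = -(zv n k i * xiv n k j) := fun k => by
      rw [zv_antisymm n k i]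
      ring
    rw [Finset.sum_congr rfl fun k _ => this k, ← Finset.sum_neg_distrib]

lemma bmat_eq : bmat n = -((uv n + sv n + gamma1 n) • Zmat n) - Zmat n * Ximat n * Zmat n := by
  apply Matrix.ext
  intro i j
  simp only [bmat, Matrix.sub_apply, Matrix.neg_apply, Matrix.smul_apply, Matrix.mul_apply,
    Zmat, Ximat, Matrix.of_apply, smul_eq_mul]
  have step1 : (∑ k : Fin n, ∑ l : Fin n, if k < l ∧ k ≠ i ∧ k ≠ j ∧ l ≠ i ∧ l ≠ j then
        (zv n i j * zv n k l - zv n i k * zv n j l + zv n i l * zv n j k) * xiv n k l else 0)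
      = ∑ k : Fin n, ∑ l : Fin n, if k < l then
        (zv n i j * zv n k l - zv n i k * zv n j l + zv n i l * zv n j k) * xiv n k l else 0 := by
    refine Finset.sum_congr rfl fun k _ => Finset.sum_congr rfl fun l _ => ?_
    by_cases hkl : k < l
    · by_cases hd : k ≠ i ∧ k ≠ j ∧ l ≠ i ∧ l ≠ j
      · rw [if_pos ⟨hkl, hd⟩, if_pos hkl]
      · rw [if_neg (fun h => hd h.2), if_pos hkl]
        have hT : zv n i j * zv n k l - zv n i k * zv n j l + zv n i l * zv n j k = 0 := by
          push_neg at hd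
          by_cases h1 : k = i
          · subst h1
            rw [zv_diag, zv_antisymm n k j]
            ring
          by_cases h2 : k = j
          · subst h2
            rw [zv_diag]
            ring
          by_cases h3 : l = i
          · subst h3
            rw [zv_diag, zv_antisymm n l k, zv_antisymm n l j]
            ring
          · have h4 : l = j := hd h1 h2 h3
            subst h4
            rw [zv_diag, zv_antisymm n l k]
            ring
        rw [hT, zero_mul]
    · rw [if_neg (fun h => hkl h.1), if_neg hkl]
  have step2 : (∑ k : Fin n, ∑ l : Fin n, if k < l then
        (zv n i j * zv n k l - zv n i k * zv n j l + zv n i l * zv n j k) * xiv n k l else 0)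
      = gamma1 n * zv n i j + ∑ k : Fin n, ∑ l : Fin n, zv n i k * xiv n k l * zv n l j := by
    have hp := sum_pairs n (fun k l => zv n i k * xiv n k l * zv n l j)
      (fun k => by simp [xiv_diag])
    rw [hp]
    simp only [gamma1]
    rw [Finset.sum_mul, ← Finset.sum_add_distrib]
    refine Finset.sum_congr rfl fun k _ => ?_
    rw [Finset.sum_mul, ← Finset.sum_add_distrib]
    refine Finset.sum_congr rfl fun l _ => ?_
    by_cases hkl : k < l
    · simp only [if_pos hkl]
      rw [xiv_antisymm n k l, zv_antisymm n j l, zv_antisymm n j k]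
      ring
    · simp only [if_neg hkl]
      ring
  have hZXZ : (∑ x : Fin n, (∑ k : Fin n, zv n i k * xiv n k x) * zv n x j)
      = ∑ k : Fin n, ∑ l : Fin n, zv n i k * xiv n k l * zv n l j := by
    have h1 : ∀ x : Fin n, (∑ k : Fin n, zv n i k * xiv n k x) * zv n x j
        = ∑ k : Fin n, zv n i k * xiv n k x * zv n x j := fun x => by rw [Finset.sum_mul]
    rw [Finset.sum_congr rfl fun x _ => h1 x, Finset.sum_comm]
  rw [step1, step2, hZXZ]
  ring

end Main

/-- With `z := Z·J_n` and `C := J_n·Ξ`, the blocks of `tσ(X)` satisfy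
`A(u) = (u+γ₁)·1 + zC`, `b(u)·J_n = −(u+s+γ₁)·z − zCz`, and
`Cz + (−J_n·A(u)ᵀ·J_n) = −(u+γ₁)·1`. -/
theorem blocks_tsigma (n : ℕ) (hn : 1 ≤ n) :
    Amat n = (uv n + gamma1 n) • 1 + (Zmat n * Jmat n) * (Jmat n * Ximat n) ∧
    bmat n * Jmat n =
      -((uv n + sv n + gamma1 n) • (Zmat n * Jmat n)) -
        (Zmat n * Jmat n) * (Jmat n * Ximat n) * (Zmat n * Jmat n) ∧
    (Jmat n * Ximat n) * (Zmat n * Jmat n) + (-(Jmat n * (Amat n)ᵀ * Jmat n)) =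
      -((uv n + gamma1 n) • 1) := by
  refine ⟨?_, ?_, ?_⟩
  · rw [Amat_eq n]
    congr 1
    rw [mul_assoc, ← mul_assoc (Jmat n), Jmat_mul_Jmat, one_mul]
  · rw [bmat_eq n, Matrix.sub_mul, Matrix.neg_mul, Matrix.smul_mul]
    have hmid : (Zmat n * Jmat n) * (Jmat n * Ximat n) = Zmat n * Ximat n := by
      rw [mul_assoc, ← mul_assoc (Jmat n), Jmat_mul_Jmat, one_mul]
    rw [hmid, ← mul_assoc (Zmat n * Ximat n) (Zmat n) (Jmat n)]
  · rw [Amat_eq n, Matrix.transpose_add, Matrix.transpose_smul, Matrix.transpose_one,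
      Matrix.transpose_mul, Zmat_transpose, Ximat_transpose, Matrix.neg_mul, Matrix.mul_neg,
      neg_neg, Matrix.mul_add, Matrix.mul_smul, mul_one, Matrix.add_mul, Matrix.smul_mul,
      Jmat_mul_Jmat]
    have hX : (Jmat n * Ximat n) * (Zmat n * Jmat n) = (Jmat n * (Ximat n * Zmat n)) * Jmat n := by
      simp [mul_assoc]
    rw [hX]
    abel

end Stmt12
end
end

section
/- Let W = (w_{ij}) be a p×q complex matrix. Then the following derivatives (of functions of a real variable t, defined for t in a sufficiently small neighborhood of 0) exist and are given by: (1) for i ∈ [p], d/dt at t=0 of e^{st} · F( exp(−t·e^{(p)}_{ii})·W·exp(−t·e^{(q)}_{qq}) ) equals s·F(W) − Σ_{l∈[q]} w_{il}·(∂_{il}F)(W) − Σ_{k∈[p]} w_{kq}·(∂_{kq}F)(W); (2) for j ∈ [q−1], d/dt at t=0 of F( W·exp(t·(e^{(q)}_{jj} − e^{(q)}_{qq})) ) equals Σ_{k∈[p]} ( w_{kj}·(∂_{kj}F)(W) − w_{kq}·(∂_{kq}F)(W) ); (3) for i ≠ j in [p], d/dt at t=0 of F( exp(−t·e^{(p)}_{ij})·W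 ) equals −Σ_{l∈[q]} w_{jl}·(∂_{il}F)(W); (4) for i ≠ j in [q], d/dt at t=0 of F( W·exp(t·e^{(q)}_{ij}) ) equals Σ_{k∈[p]} w_{ki}·(∂_{kj}F)(W); (5) for i ∈ [p], j ∈ [q], d/dt at t=0 of F( W − t·e^{(p,q)}_{ij} ) equals −(∂_{ij}F)(W); (6) for i ∈ [p], j ∈ [q], the matrix 1_q − t·e^{(q,p)}_{ji}·W is invertible for t near 0, and d/dt at t=0 of det(1_q − t·e^{(q,p)}_{ji}·W)^s · F( W·(1_q − t·e^{(q,p)}_{ji}·W)^{−1} ) equals −s·w_{ij}·F(W) + Σ_{k∈[p], l∈[q]} w_{kj}w_{il}·(∂_{kl}F)(W). -/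
open Matrix BigOperators

noncomputable section

namespace Stmt17

/-- the `p × q` matrix unit `e_{ij}` -/
def E (p q : ℕ) (i : Fin p) (j : Fin q) : Matrix (Fin p) (Fin q) ℂ :=
  Matrix.single i j 1

/-- evaluation of a polynomial `F` at a `p × q` matrix `W` -/
def evalAt {p q : ℕ} (F : MvPolynomial (Fin p × Fin q) ℂ)
    (W : Matrix (Fin p) (Fin q) ℂ) : ℂ :=
  MvPolynomial.eval (fun v => W v.1 v.2) F

/-- the formal partial derivative `∂_{ij} F` -/
def pd {p q : ℕ} (F : MvPolynomial (Fin p × Fin q) ℂ) (i : Fin p) (j : Fin q) :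
    MvPolynomial (Fin p × Fin q) ℂ :=
  MvPolynomial.pderiv (i, j) F

attribute [local instance] Matrix.linftyOpNormedRing Matrix.linftyOpNormedAlgebra

example (n : ℕ) : CompleteSpace (Matrix (Fin n) (Fin n) ℂ) := FiniteDimensional.complete ℂ _

lemma chain {n : Type*} [Fintype n] [DecidableEq n] (F : MvPolynomial n ℂ)
    {γ : ℝ → n → ℂ} {d : n → ℂ} (h : ∀ v, HasDerivAt (fun t => γ t v) (d v) 0) :
    HasDerivAt (fun t => MvPolynomial.eval (γ t) F)
      (∑ v, d v * MvPolynomial.eval (γ 0) (MvPolynomial.pderiv v F)) 0 := by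
  induction F using MvPolynomial.induction_on with
  | C a => simpa using hasDerivAt_const (0 : ℝ) a
  | add f g hf hg => simpa [mul_add, Finset.sum_add_distrib] using hf.fun_add hg
  | mul_X f v ih =>
    have h2 := ih.mul (h v)
    simp only [MvPolynomial.eval_mul, MvPolynomial.eval_X] at h2 ⊢
    refine h2.congr_deriv ?_
    symm
    simp only [MvPolynomial.pderiv_mul, MvPolynomial.pderiv_X, MvPolynomial.eval_add,
      MvPolynomial.eval_mul, Pi.single_apply, apply_ite (MvPolynomial.eval (γ 0)),
      MvPolynomial.eval_zero, mul_ite, mul_one, mul_zero, map_zero, MvPolynomial.eval_X,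
      mul_add, Finset.sum_add_distrib, Finset.sum_ite_eq, Finset.sum_ite_eq',
      Finset.mem_univ, if_true]
    rw [Finset.sum_mul]
    simp [mul_assoc, mul_comm, mul_left_comm]


lemma key {p q : ℕ} (F : MvPolynomial (Fin p × Fin q) ℂ) {γ : ℝ → Matrix (Fin p) (Fin q) ℂ}
    {D W : Matrix (Fin p) (Fin q) ℂ}
    (h : ∀ k l, HasDerivAt (fun t => γ t k l) (D k l) 0) (h0 : γ 0 = W) :
    HasDerivAt (fun t => evalAt F (γ t))
      (∑ k, ∑ l, D k l * evalAt (pd F k l) W) 0 := by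
  have := chain F (γ := fun t v => γ t v.1 v.2) (d := fun v => D v.1 v.2)
      (fun v => h v.1 v.2)
  simpa [evalAt, pd, h0, Fintype.sum_prod_type] using this

lemma entryD {n : ℕ} {M : ℝ → Matrix (Fin n) (Fin n) ℂ} {D : Matrix (Fin n) (Fin n) ℂ}
    (h : HasDerivAt M D 0) (k l : Fin n) :
    HasDerivAt (fun t => M t k l) (D k l) 0 := by
  have := (((Matrix.entryLinearMap ℂ ℂ k l).toContinuousLinearMap).restrictScalars
      ℝ).hasFDerivAt.comp_hasDerivAt 0 h
  exact this

lemma expD {n : ℕ} (A : Matrix (Fin n) (Fin n) ℂ) :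
    HasDerivAt (fun t : ℝ => NormedSpace.exp ((t : ℂ) • A)) A 0 := by
  have h1 := hasDerivAt_exp_smul_const (𝕂 := ℂ) A (0 : ℂ)
  rw [zero_smul, NormedSpace.exp_zero, one_mul] at h1
  have h2 : HasDerivAt (fun t : ℝ => (t : ℂ)) 1 0 := by
    simpa using (hasDerivAt_id (0:ℝ)).ofReal_comp
  have := h1.scomp (x := (0:ℝ)) (h := fun t : ℝ => (t : ℂ)) h2
  simp only [one_smul] at this
  exact this

lemma expDe {n : ℕ} (A : Matrix (Fin n) (Fin n) ℂ) (k l : Fin n) :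
    HasDerivAt (fun t : ℝ => NormedSpace.exp ((t : ℂ) • A) k l) (A k l) 0 :=
  entryD (expD A) k l

lemma expDe' {n : ℕ} (A : Matrix (Fin n) (Fin n) ℂ) (k l : Fin n) :
    HasDerivAt (fun t : ℝ => NormedSpace.exp (-((t : ℂ) • A)) k l) ((-A) k l) 0 := by
  simpa [smul_neg] using expDe (-A) k l

lemma mulD {p q r : ℕ} {X : ℝ → Matrix (Fin p) (Fin q) ℂ} {Y : ℝ → Matrix (Fin q) (Fin r) ℂ}
    {X' X₀ : Matrix (Fin p) (Fin q) ℂ} {Y' Y₀ : Matrix (Fin q) (Fin r) ℂ}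
    (hX : ∀ k l, HasDerivAt (fun t => X t k l) (X' k l) 0) (hX0 : X 0 = X₀)
    (hY : ∀ k l, HasDerivAt (fun t => Y t k l) (Y' k l) 0) (hY0 : Y 0 = Y₀)
    (k : Fin p) (l : Fin r) :
    HasDerivAt (fun t => (X t * Y t) k l) ((X' * Y₀ + X₀ * Y') k l) 0 := by
  have : HasDerivAt (fun t => ∑ a, X t k a * Y t a l)
      (∑ a, (X' k a * Y 0 a l + X 0 k a * Y' a l)) 0 :=
    HasDerivAt.fun_sum fun a _ => (hX k a).mul (hY a l)
  simpa [Matrix.mul_apply, hX0, hY0, Finset.sum_add_distrib, Matrix.add_apply] using this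

lemma constD {p q : ℕ} (W : Matrix (Fin p) (Fin q) ℂ) (k : Fin p) (l : Fin q) :
    HasDerivAt (fun _ : ℝ => W k l) ((0 : Matrix (Fin p) (Fin q) ℂ) k l) 0 := by
  simpa using hasDerivAt_const (0 : ℝ) (W k l)

lemma E_mul_apply {p q : ℕ} (a : Fin p) (b : Fin p) (W : Matrix (Fin p) (Fin q) ℂ)
    (k : Fin p) (l : Fin q) :
    (E p p a b * W) k l = if a = k then W b l else 0 := by
  simp [E, Matrix.mul_apply, Matrix.single, Matrix.of_apply, ite_and,
    Finset.sum_ite_eq, Finset.sum_ite_eq']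

lemma mul_E_apply {p q : ℕ} (a : Fin q) (b : Fin q) (W : Matrix (Fin p) (Fin q) ℂ)
    (k : Fin p) (l : Fin q) :
    (W * E q q a b) k l = if b = l then W k a else 0 := by
  simp [E, Matrix.mul_apply, Matrix.single, Matrix.of_apply, ite_and,
    Finset.sum_ite_eq, Finset.sum_ite_eq']

/-- The differential operators of the holomorphic discrete series for
`SU(p,q)`: the six families of derivatives exist and are given by the stated formulas. -/
theorem su_derivatives (p q : ℕ) (hq : 1 ≤ q) (hpq : q ≤ p) (s : ℕ)
    (F : MvPolynomial (Fin p × Fin q) ℂ) (W : Matrix (Fin p) (Fin q) ℂ) :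
    (∀ i : Fin p,
      HasDerivAt (fun t : ℝ =>
          Complex.exp ((s : ℂ) * (t : ℂ)) *
            evalAt F (NormedSpace.exp (-((t : ℂ) • E p p i i)) * W *
              NormedSpace.exp (-((t : ℂ) • E q q ⟨q - 1, by omega⟩ ⟨q - 1, by omega⟩))))
        ((s : ℂ) * evalAt F W - (∑ l : Fin q, W i l * evalAt (pd F i l) W) -
          ∑ k : Fin p, W k ⟨q - 1, by omega⟩ * evalAt (pd F k ⟨q - 1, by omega⟩) W) 0) ∧
    (∀ j : Fin q, (j : ℕ) + 1 < q →
      HasDerivAt (fun t : ℝ =>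
          evalAt F (W * NormedSpace.exp
            ((t : ℂ) • (E q q j j - E q q ⟨q - 1, by omega⟩ ⟨q - 1, by omega⟩))))
        (∑ k : Fin p, (W k j * evalAt (pd F k j) W -
          W k ⟨q - 1, by omega⟩ * evalAt (pd F k ⟨q - 1, by omega⟩) W)) 0) ∧
    (∀ i j : Fin p, i ≠ j →
      HasDerivAt (fun t : ℝ => evalAt F (NormedSpace.exp (-((t : ℂ) • E p p i j)) * W))
        (-∑ l : Fin q, W j l * evalAt (pd F i l) W) 0) ∧
    (∀ i j : Fin q, i ≠ j →
      HasDerivAt (fun t : ℝ => evalAt F (W * NormedSpace.exp ((t : ℂ) • E q q i j)))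
        (∑ k : Fin p, W k i * evalAt (pd F k j) W) 0) ∧
    (∀ (i : Fin p) (j : Fin q),
      HasDerivAt (fun t : ℝ => evalAt F (W - (t : ℂ) • E p q i j))
        (-evalAt (pd F i j) W) 0) ∧
    (∀ (i : Fin p) (j : Fin q),
      (∀ᶠ t : ℝ in nhds 0, IsUnit (1 - (t : ℂ) • (E q p j i * W))) ∧
      HasDerivAt (fun t : ℝ =>
          (1 - (t : ℂ) • (E q p j i * W)).det ^ s *
            evalAt F (W * (1 - (t : ℂ) • (E q p j i * W))⁻¹))
        (-(s : ℂ) * W i j * evalAt F W +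
          ∑ k : Fin p, ∑ l : Fin q, W k j * W i l * evalAt (pd F k l) W) 0) := by
  have q' : Fin q := ⟨q - 1, by omega⟩
  refine ⟨?_, ?_, ?_, ?_, ?_, ?_⟩
  · -- part 1
    intro i
    set q' : Fin q := ⟨q - 1, by omega⟩ with hq'
    have h1 : ∀ k l, HasDerivAt
        (fun t : ℝ => (NormedSpace.exp (-((t : ℂ) • E p p i i)) * W) k l)
        (((-(E p p i i)) * W + (1 : Matrix (Fin p) (Fin p) ℂ) *
          (0 : Matrix (Fin p) (Fin q) ℂ)) k l) 0 :=
      mulD (expDe' (E p p i i)) (by simp) (constD W) rfl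
    have h2 : ∀ k l, HasDerivAt
        (fun t : ℝ => (NormedSpace.exp (-((t : ℂ) • E p p i i)) * W *
          NormedSpace.exp (-((t : ℂ) • E q q q' q'))) k l)
        ((((-(E p p i i)) * W + (1 : Matrix (Fin p) (Fin p) ℂ) *
          (0 : Matrix (Fin p) (Fin q) ℂ)) * (1 : Matrix (Fin q) (Fin q) ℂ) +
          W * (-(E q q q' q'))) k l) 0 := by
      intro k l
      exact mulD h1 (by simp) (expDe' (E q q q' q')) (by simp) k l
    have hkey := key F (W := W) h2 (by simp)
    have hfac : HasDerivAt (fun t : ℝ => Complex.exp ((s : ℂ) * (t : ℂ))) (s : ℂ) 0 := by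
      have hs : HasDerivAt (fun t : ℝ => (s : ℂ) * (t : ℂ)) (s : ℂ) 0 := by
        simpa using (Complex.ofRealCLM.hasDerivAt (x := (0 : ℝ))).const_mul (s : ℂ)
      simpa using hs.cexp
    have := hfac.mul hkey
    refine this.congr_deriv ?_
    symm
    simp only [Complex.ofReal_zero, zero_smul, neg_zero, NormedSpace.exp_zero,
      Matrix.one_mul, Matrix.mul_one, Matrix.mul_zero, Matrix.zero_mul, mul_zero,
      add_zero, Complex.exp_zero, one_mul, Matrix.neg_mul, Matrix.mul_neg,
      Matrix.add_apply, Matrix.neg_apply, E_mul_apply, mul_E_apply, ite_mul, zero_mul,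
      neg_mul, neg_add_rev, sub_mul, add_mul, Finset.sum_sub_distrib, Finset.sum_add_distrib,
      Finset.sum_neg_distrib,
      Finset.sum_ite_irrel, Finset.sum_const_zero, Finset.sum_ite_eq, Finset.mem_univ,
      if_true]
    ring
  · -- part 2
    intro j hj
    set q' : Fin q := ⟨q - 1, by omega⟩ with hq'
    have hent : ∀ k l, HasDerivAt
        (fun t : ℝ => (W * NormedSpace.exp ((t : ℂ) • (E q q j j - E q q q' q'))) k l)
        (((0 : Matrix (Fin p) (Fin q) ℂ) * (1 : Matrix (Fin q) (Fin q) ℂ) +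
          W * (E q q j j - E q q q' q')) k l) 0 :=
      mulD (constD W) rfl (expDe (E q q j j - E q q q' q')) (by simp)
    have := key F (W := W) hent (by simp)
    convert this using 1
    simp only [Matrix.zero_mul, zero_add, Matrix.mul_sub, Matrix.sub_apply, mul_E_apply,
      sub_mul, ite_mul, zero_mul, Finset.sum_sub_distrib, Finset.sum_ite_irrel,
      Finset.sum_const_zero, Finset.sum_ite_eq, Finset.mem_univ, if_true]
  · -- part 3
    intro i j hij
    have hent : ∀ k l, HasDerivAt
        (fun t : ℝ => (NormedSpace.exp (-((t : ℂ) • E p p i j)) * W) k l)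
        (((-(E p p i j)) * W + (1 : Matrix (Fin p) (Fin p) ℂ) *
          (0 : Matrix (Fin p) (Fin q) ℂ)) k l) 0 :=
      mulD (expDe' (E p p i j)) (by simp) (constD W) rfl
    have := key F (W := W) hent (by simp)
    convert this using 1
    simp only [Matrix.mul_zero, add_zero, Matrix.neg_mul, Matrix.neg_apply, E_mul_apply,
      neg_mul, ite_mul, zero_mul, Finset.sum_neg_distrib, Finset.sum_ite_irrel,
      Finset.sum_const_zero, Finset.sum_ite_eq, Finset.mem_univ, if_true]
  · -- part 4
    intro i j hij
    have hent : ∀ k l, HasDerivAt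
        (fun t : ℝ => (W * NormedSpace.exp ((t : ℂ) • E q q i j)) k l)
        (((0 : Matrix (Fin p) (Fin q) ℂ) * (1 : Matrix (Fin q) (Fin q) ℂ) +
          W * E q q i j) k l) 0 :=
      mulD (constD W) rfl (expDe (E q q i j)) (by simp)
    have := key F (W := W) hent (by simp)
    convert this using 1
    simp only [Matrix.zero_mul, zero_add, mul_E_apply, ite_mul, zero_mul,
      Finset.sum_ite_irrel, Finset.sum_const_zero, Finset.sum_ite_eq, Finset.mem_univ,
      if_true]
  · -- part 5
    intro i j
    have hent : ∀ k l, HasDerivAt (fun t : ℝ => (W - (t : ℂ) • E p q i j) k l)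
        ((-(E p q i j)) k l) 0 := by
      intro k l
      have h1 : HasDerivAt (fun t : ℝ => (t : ℂ) * E p q i j k l) (E p q i j k l) 0 := by
        simpa using Complex.ofRealCLM.hasDerivAt.mul_const (E p q i j k l)
      simpa [Matrix.sub_apply, Matrix.smul_apply, smul_eq_mul,
        Matrix.neg_apply] using h1.const_sub (W k l)
    have := key F (W := W) hent (by simp)
    convert this using 1
    simp [E, Matrix.neg_apply, Matrix.single, Matrix.of_apply, ite_and,
      Finset.sum_ite_eq, Finset.sum_ite_eq']
  · -- part 6
    intro i j
    have hNapp : ∀ a b, (E q p j i * W) a b = if j = a then W i b else 0 := by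
      intro a b
      simp [E, Matrix.mul_apply, Matrix.single, Matrix.of_apply, ite_and,
        Finset.sum_ite_eq, Finset.sum_ite_eq']
    have detEq : ∀ t : ℂ, ((1 : Matrix (Fin q) (Fin q) ℂ) - t • (E q p j i * W)).det =
        1 - t * W i j := by
      intro t
      have hrw : (1 : Matrix (Fin q) (Fin q) ℂ) - t • (E q p j i * W) =
          1 + Matrix.replicateCol Unit (fun a => if a = j then -t else 0) *
            Matrix.replicateRow Unit (fun b => W i b) := by
        ext a b
        simp only [Matrix.sub_apply, Matrix.add_apply, Matrix.smul_apply, hNapp,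
          smul_eq_mul, Matrix.mul_apply, Finset.univ_unique, Finset.sum_singleton,
          Matrix.replicateCol_apply, Matrix.replicateRow_apply]
        by_cases h : j = a
        · subst h; rw [if_pos rfl, if_pos rfl]; ring
        · rw [if_neg h, if_neg (fun hh => h hh.symm)]; ring
      rw [hrw, Matrix.det_one_add_replicateCol_mul_replicateRow]
      simp [dotProduct, mul_ite, mul_zero, Finset.sum_ite_eq', eq_comm]
      ring
    constructor
    · have hcont : ContinuousAt (fun t : ℝ => (1 : ℂ) - (t : ℂ) * W i j) 0 := by fun_prop
      have hne : ∀ᶠ t : ℝ in nhds 0, (1 : ℂ) - (t : ℂ) * W i j ≠ 0 :=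
        hcont.eventually_ne (by simp)
      filter_upwards [hne] with t ht
      rw [Matrix.isUnit_iff_isUnit_det, detEq]
      exact ht.isUnit
    · have hfun : (fun t : ℝ => ((1 : Matrix (Fin q) (Fin q) ℂ) -
          (t : ℂ) • (E q p j i * W)).det ^ s *
            evalAt F (W * ((1 : Matrix (Fin q) (Fin q) ℂ) - (t : ℂ) • (E q p j i * W))⁻¹)) =
          fun t : ℝ => ((1 : ℂ) - (t : ℂ) * W i j) ^ s *
            evalAt F (W * Ring.inverse ((1 : Matrix (Fin q) (Fin q) ℂ) -
              (t : ℂ) • (E q p j i * W))) := by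
        funext t
        rw [detEq, Matrix.nonsing_inv_eq_ringInverse]
      rw [hfun]
      have hlin : HasDerivAt (fun t : ℝ => (1 : ℂ) - (t : ℂ) * W i j) (-(W i j)) 0 := by
        simpa using (Complex.ofRealCLM.hasDerivAt.mul_const (W i j)).const_sub 1
      have hlinC : HasDerivAt (fun z : ℂ => (1 : ℂ) - z * W i j) (-(W i j)) 0 := by
        simpa using ((hasDerivAt_id (0 : ℂ)).mul_const (W i j)).const_sub 1
      have hpowC := hlinC.pow s
      have hpow : HasDerivAt (fun t : ℝ => ((1 : ℂ) - (t : ℂ) * W i j) ^ s)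
          ((s : ℂ) * ((1 : ℂ) - 0 * W i j) ^ (s - 1) * -W i j) 0 := by
        have h2 := hpowC.comp_ofReal (z := 0)
        simpa using h2
      have hsmul : HasDerivAt (fun t : ℝ => (t : ℂ) • (E q p j i * W)) (E q p j i * W) 0 := by
        have := ((hasDerivAt_id (0:ℝ)).ofReal_comp).smul_const (E q p j i * W)
        simp only [id, Complex.ofReal_one, one_smul] at this
        exact this
      have hcurve : HasDerivAt (fun t : ℝ => (1 : Matrix (Fin q) (Fin q) ℂ) -
          (t : ℂ) • (E q p j i * W)) (-(E q p j i * W)) 0 := by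
        exact hsmul.const_sub 1
      have hinv : HasDerivAt (fun t : ℝ => Ring.inverse ((1 : Matrix (Fin q) (Fin q) ℂ) -
          (t : ℂ) • (E q p j i * W))) (E q p j i * W) 0 := by
        have h := hasFDerivAt_ringInverse (𝕜 := ℂ) (1 : (Matrix (Fin q) (Fin q) ℂ)ˣ)
        simp only [inv_one, Units.val_one] at h
        have hy : (1 : Matrix (Fin q) (Fin q) ℂ) =
            (fun t : ℝ => (1 : Matrix (Fin q) (Fin q) ℂ) - (t : ℂ) • (E q p j i * W)) 0 := by
          simp
        have h2 := HasFDerivAt.comp_hasDerivAt_of_eq (0 : ℝ) (h.restrictScalars ℝ) hcurve hy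
        simp only [ContinuousLinearMap.coe_restrictScalars', ContinuousLinearMap.neg_apply,
          ContinuousLinearMap.mulLeftRight_apply, neg_neg,
          mul_one, one_mul, Function.comp_def] at h2
        exact h2
      have hent : ∀ k l, HasDerivAt
          (fun t : ℝ => (W * Ring.inverse ((1 : Matrix (Fin q) (Fin q) ℂ) -
            (t : ℂ) • (E q p j i * W))) k l)
          (((0 : Matrix (Fin p) (Fin q) ℂ) * (1 : Matrix (Fin q) (Fin q) ℂ) +
            W * (E q p j i * W)) k l) 0 :=
        mulD (constD W) rfl (fun k l => entryD hinv k l) (by simp)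
      have hkey := key F (W := W) hent (by simp)
      have := hpow.mul hkey
      refine this.congr_deriv ?_
      symm
      have hWN : ∀ (k : Fin p) (l : Fin q), (W * (E q p j i * W)) k l = W k j * W i l := by
        intro k l
        simp [Matrix.mul_apply, hNapp, mul_ite, mul_zero, Finset.sum_ite_eq]
      simp only [Matrix.zero_mul, zero_add, Matrix.add_apply, Matrix.zero_apply, hWN,
        Complex.ofReal_zero,
        zero_mul, sub_zero, one_pow, zero_smul, Ring.inverse_one, Matrix.mul_one,
        one_mul, mul_one, smul_eq_mul]
      ring

end Stmt17
end
end
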